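/- arXiv:2402.15441 — 5 statements merged into one kernel-verified Lean document; each statement's English description precedes it below -/
import Mathlib

section
/- In the Gaussian kernel setting with finite sample space S, for any k ≥ 0 there exists a multiset B ⊆ S with |B| = k such that for all x' ∈ S, Var(f_{x'} | y_B) ≤ 2σ̃² · γ_{k+1}/(k+1), where σ̃² = max_{x∈𝒳}(k(x,x) + ρ²(x)). Such a B is obtained by greedily selecting points maximizing I(f_S; y_x | y_{B_{i-1}}). -/
open Matrix Real

namespace TransductiveAL

variable {ι : Type*}

/-- Kernel matrix of the kernel `k` over the (multi-)list of points `X`. -/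
noncomputable def kerMat (k : Matrix ι ι ℝ) (X : List ι) :
    Matrix (Fin X.length) (Fin X.length) ℝ :=
  Matrix.of fun i j => k (X.get i) (X.get j)

/-- Diagonal noise covariance matrix `P_X` over the (multi-)list of points `X`. -/
noncomputable def noiseMat (ρ2 : ι → ℝ) (X : List ι) :
    Matrix (Fin X.length) (Fin X.length) ℝ :=
  Matrix.diagonal fun i => ρ2 (X.get i)

/-- Posterior covariance `Cov(f_x, f_{x'} ∣ y_X)` after noisy observations at the points of `X`
(Schur complement formula `k(x,x') − K_{xX}(K_{XX}+P_X)⁻¹K_{Xx'}`). -/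
noncomputable def postCov (k : Matrix ι ι ℝ) (ρ2 : ι → ℝ) (X : List ι) (x x' : ι) : ℝ :=
  k x x' - ∑ i : Fin X.length, ∑ j : Fin X.length,
    k x (X.get i) * (kerMat k X + noiseMat ρ2 X)⁻¹ i j * k (X.get j) x'

/-- Posterior variance `Var(f_x ∣ y_X)`. -/
noncomputable def postVar (k : Matrix ι ι ℝ) (ρ2 : ι → ℝ) (X : List ι) (x : ι) : ℝ :=
  postCov k ρ2 X x x

/-- Posterior covariance matrix `Var(f_A ∣ y_D)` of the target vector `f_A` given
noisy observations at `D`. -/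
noncomputable def targetCov [DecidableEq ι] (k : Matrix ι ι ℝ) (ρ2 : ι → ℝ)
    (A : Finset ι) (D : List ι) : Matrix A A ℝ :=
  Matrix.of fun x x' => postCov k ρ2 D x.1 x'.1

/-- Information gain `I(f_A; y_B ∣ D) = ½(log det Var(f_A ∣ D) − log det Var(f_A ∣ D, y_B))`. -/
noncomputable def iGain [DecidableEq ι] (k : Matrix ι ι ℝ) (ρ2 : ι → ℝ)
    (A : Finset ι) (D B : List ι) : ℝ :=
  (1 / 2) * (Real.log (targetCov k ρ2 A D).det - Real.log (targetCov k ρ2 A (D ++ B)).det)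

/-- Information gain `I(f_x; y_B ∣ D) = ½ log (Var(f_x ∣ D) / Var(f_x ∣ D, y_B))`
for a single target point `x`. -/
noncomputable def pointGain (k : Matrix ι ι ℝ) (ρ2 : ι → ℝ) (x : ι) (D B : List ι) : ℝ :=
  (1 / 2) * (Real.log (postVar k ρ2 D x) - Real.log (postVar k ρ2 (D ++ B) x))

/-- Maximum information gain `γ_n` obtainable from `n` noisy observations within `S`. -/
noncomputable def maxInfoGain [DecidableEq ι] (k : Matrix ι ι ℝ) (ρ2 : ι → ℝ)
    (S : Finset ι) (n : ℕ) : ℝ :=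
  sSup { v | ∃ X : List ι, X.length ≤ n ∧ (∀ x ∈ X, x ∈ S) ∧
    v = (1 / 2) * Real.log (1 + (noiseMat ρ2 X)⁻¹ * kerMat k X).det }

/-- Step-wise ITL objective value `Γ = max_{x ∈ S} I(f_A; y_x ∣ D)`. -/
noncomputable def stepGain [DecidableEq ι] (k : Matrix ι ι ℝ) (ρ2 : ι → ℝ)
    (A S : Finset ι) (D : List ι) : ℝ :=
  sSup { v | ∃ x ∈ S, v = iGain k ρ2 A D [x] }

/-- Kernel matrix `K_SS` restricted to a finset `S`. -/
noncomputable def kerMatOn (k : Matrix ι ι ℝ) (S : Finset ι) : Matrix S S ℝ :=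
  Matrix.of fun i j => k i.1 j.1

/-- Noiseless conditional variance `Var(f_x ∣ f_S) = k(x,x) − K_{xS} K_SS⁻¹ K_{Sx}`
(the irreducible uncertainty `η_S²(x)`). -/
noncomputable def noiselessCondVar [DecidableEq ι] (k : Matrix ι ι ℝ) (S : Finset ι)
    (x : ι) : ℝ :=
  k x x - ∑ i : S, ∑ j : S, k x i.1 * (kerMatOn k S)⁻¹ i j * k j.1 x

/-- List of the first `n` observation points of a sequence. -/
def obsList (xs : ℕ → ι) (n : ℕ) : List ι := (List.range n).map xs

/-- The sequence `xs` follows the ITL decision rule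
`xᵢ ∈ argmax_{x ∈ S} I(f_A; y_x ∣ D_{i-1})`. -/
def IsITL [DecidableEq ι] (k : Matrix ι ι ℝ) (ρ2 : ι → ℝ) (A S : Finset ι)
    (xs : ℕ → ι) : Prop :=
  ∀ i : ℕ, xs i ∈ S ∧ ∀ x ∈ S,
    iGain k ρ2 A (obsList xs i) [x] ≤ iGain k ρ2 A (obsList xs i) [xs i]

/-- Smallest spectral value (the smallest eigenvalue, for symmetric real matrices). -/
noncomputable def minEig {m : Type*} [Fintype m] [DecidableEq m] (M : Matrix m m ℝ) : ℝ :=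
  sInf (spectrum ℝ M)

/-!
Choose the batch greedily, each time taking a point of `S` that maximises the noise-normalised
posterior variance `σ²_D(x) / ρ²(x)`. Posterior variances only shrink as observations are added
(`σ²_D(x) = k(x,x) − max_w (2 wᵀK_{Dx} − wᵀ(K_DD + P_D)w)`, and padding `w` with zeros is
allowed), so for the final batch `B`, `x' ∈ S` and `t = σ²_B(x') / ρ²(x')` every one of the `n`
greedy ratios is at least `t`. The Schur complement expansion
`det(K + P)_{X ++ [x]} = det(K + P)_X · (σ²_X(x) + ρ²(x))` then gives
`det(I + P⁻¹K)_{B ++ [x']} ≥ (1 + t)^(n+1)`, i.e. `(n+1)/2 · log(1 + t) ≤ γ_{n+1}`. Finally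
`σ²_B(x') = ρ²t ≤ (ρ² + σ²_B(x')) log(1 + t) ≤ σ̃² log(1 + t)` since `t ≤ (1 + t) log(1 + t)`.
-/

theorem _root_.Matrix.PosDef.two_mul_dotProduct_sub_le {n : Type*} [Fintype n] [DecidableEq n]
    {M : Matrix n n ℝ} (hM : M.PosDef) (v w : n → ℝ) :
    2 * (w ⬝ᵥ v) - w ⬝ᵥ (M *ᵥ w) ≤ v ⬝ᵥ (M⁻¹ *ᵥ v) := by
  set u := M⁻¹ *ᵥ v
  have hMu : M *ᵥ u = v := by
    rw [mulVec_mulVec, mul_nonsing_inv _ hM.det_pos.ne'.isUnit, one_mulVec]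
  have hsymm : u ⬝ᵥ (M *ᵥ w) = w ⬝ᵥ (M *ᵥ u) := by
    rw [dotProduct_mulVec, ← mulVec_transpose, ← conjTranspose_eq_transpose_of_trivial,
      hM.isHermitian, dotProduct_comm]
  have hsq := hM.posSemidef.dotProduct_mulVec_nonneg (w - u)
  simp only [star_trivial, mulVec_sub, dotProduct_sub, sub_dotProduct, hsymm, hMu] at hsq
  rw [dotProduct_comm v u]
  linarith

theorem _root_.Matrix.PosDef.two_mul_dotProduct_inv_mulVec_sub {n : Type*} [Fintype n]
    [DecidableEq n] {M : Matrix n n ℝ} (hM : M.PosDef) (v : n → ℝ) :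
    2 * ((M⁻¹ *ᵥ v) ⬝ᵥ v) - (M⁻¹ *ᵥ v) ⬝ᵥ (M *ᵥ (M⁻¹ *ᵥ v)) = v ⬝ᵥ (M⁻¹ *ᵥ v) := by
  rw [mulVec_mulVec, mul_nonsing_inv _ hM.det_pos.ne'.isUnit, one_mulVec, dotProduct_comm]
  ring

theorem _root_.Function.Injective.extend_zero_dotProduct {m n : Type*} [Fintype m] [Fintype n]
    {e : m → n} (he : Function.Injective e) (u : m → ℝ) (a : n → ℝ) :
    Function.extend e u 0 ⬝ᵥ a = u ⬝ᵥ (a ∘ e) := by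
  refine (Fintype.sum_of_injective e he _ _ (fun j hj => ?_) fun i => ?_).symm
  · rw [Function.extend_apply' _ _ _ hj, Pi.zero_apply, zero_mul]
  · rw [Function.comp_apply, he.extend_apply]

/-- Extending the optimal weights `(M.submatrix e e)⁻¹ *ᵥ (v ∘ e)` by zero is admissible in
`two_mul_dotProduct_sub_le` for `M`. -/
theorem _root_.Matrix.PosDef.dotProduct_inv_mulVec_submatrix_le {m n : Type*} [Fintype m]
    [DecidableEq m] [Fintype n] [DecidableEq n]
    {M : Matrix n n ℝ} (hM : M.PosDef) (e : m ↪ n) (v : n → ℝ) :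
    (v ∘ e) ⬝ᵥ ((M.submatrix e e)⁻¹ *ᵥ (v ∘ e)) ≤ v ⬝ᵥ (M⁻¹ *ᵥ v) := by
  set u := (M.submatrix e e)⁻¹ *ᵥ (v ∘ e)
  have hMw : (M *ᵥ Function.extend e u 0) ∘ e = M.submatrix e e *ᵥ u := by
    ext i
    simp only [Function.comp_apply, mulVec, dotProduct_comm (M (e i)),
      e.injective.extend_zero_dotProduct]
    exact dotProduct_comm _ _
  have key := hM.two_mul_dotProduct_sub_le v (Function.extend e u 0)
  rwa [e.injective.extend_zero_dotProduct, e.injective.extend_zero_dotProduct, hMw,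
    (hM.submatrix e.injective).two_mul_dotProduct_inv_mulVec_sub] at key

theorem _root_.Matrix.conjTranspose_replicateCol_mul_mul_replicateCol_apply {m : Type*}
    [Fintype m] (A : Matrix m m ℝ) (v : m → ℝ) (u : Unit) :
    ((replicateCol Unit v)ᴴ * A * replicateCol Unit v) u u = v ⬝ᵥ (A *ᵥ v) := by
  rw [Matrix.mul_assoc, ← replicateCol_mulVec, conjTranspose_replicateCol, star_trivial,
    replicateRow_mul_replicateCol_apply]

noncomputable def gramMat {m : Type*} [DecidableEq m] (k : Matrix ι ι ℝ) (g : m → ι)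
    (d : m → ℝ) : Matrix m m ℝ :=
  k.submatrix g g + diagonal d

/-- `det(I + P_X⁻¹ K_XX) = exp (2 I(f; y_X))`. -/
noncomputable def infoDet (k : Matrix ι ι ℝ) (ρ2 : ι → ℝ) (X : List ι) : ℝ :=
  (1 + (noiseMat ρ2 X)⁻¹ * kerMat k X).det

def greedyList (pick : List ι → ι) : ℕ → List ι
  | 0 => []
  | i + 1 => greedyList pick i ++ [pick (greedyList pick i)]

section

variable {m n : Type*} [DecidableEq m] [DecidableEq n] {k : Matrix ι ι ℝ} {ρ2 : ι → ℝ}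

theorem kerMat_add_noiseMat (X : List ι) :
    kerMat k X + noiseMat ρ2 X = gramMat k X.get (ρ2 ∘ X.get) := rfl

theorem gramMat_submatrix (g : n → ι) (d : n → ℝ) (e : m ↪ n) :
    (gramMat k g d).submatrix e e = gramMat k (g ∘ e) (d ∘ e) := by
  simp [gramMat, submatrix_add]

theorem gramMat_sumElim (hk : k.PosSemidef) (g : m → ι) (d : m → ℝ) (x : ι) (c : ℝ) :
    gramMat k (Sum.elim g fun _ : Unit => x) (Sum.elim d fun _ => c) =
      fromBlocks (gramMat k g d) (replicateCol Unit fun i => k (g i) x)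
        (replicateCol Unit fun i => k (g i) x)ᴴ (of fun _ _ => k x x + c) := by
  ext (i | i) (j | j) <;> simp [gramMat, diagonal_apply]
  simpa using (hk.isHermitian.apply x (g j)).symm

theorem posSemidef_gramMat (hk : k.PosSemidef) (g : m → ι) {d : m → ℝ} (hd : 0 ≤ d) :
    (gramMat k g d).PosSemidef :=
  (hk.submatrix g).add (PosSemidef.diagonal hd)

theorem posDef_gramMat (hk : k.PosSemidef) (g : m → ι) {d : m → ℝ} (hd : ∀ i, 0 < d i) :
    (gramMat k g d).PosDef :=
  PosDef.posSemidef_add (hk.submatrix g) (posDef_diagonal_iff.mpr hd)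

theorem postVar_eq_sub_dotProduct (hk : k.PosSemidef) (X : List ι) (x : ι) :
    postVar k ρ2 X x = k x x - (fun i => k (X.get i) x) ⬝ᵥ
      ((gramMat k X.get (ρ2 ∘ X.get))⁻¹ *ᵥ fun i => k (X.get i) x) := by
  have hsymm : ∀ i, k x (X.get i) = k (X.get i) x := fun i => by
    simpa using hk.isHermitian.apply (X.get i) x
  simp only [postVar, postCov, kerMat_add_noiseMat, dotProduct, mulVec, Finset.mul_sum, hsymm,
    mul_assoc]

/-- The Gram matrix of `X ++ [x]` with the noise at `x` removed is positive semidefinite, and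
its Schur complement with respect to the `X` block is `postVar k ρ2 X x`. -/
theorem postVar_nonneg (hk : k.PosSemidef) (hρ : ∀ x, 0 < ρ2 x) (X : List ι) (x : ι) :
    0 ≤ postVar k ρ2 X x := by
  have hA := posDef_gramMat hk X.get (d := ρ2 ∘ X.get) fun i => hρ (X.get i)
  have := hA.isUnit.invertible
  have hblock := posSemidef_gramMat hk (Sum.elim X.get fun _ : Unit => x)
    (d := Sum.elim (ρ2 ∘ X.get) fun _ => 0) (by rintro (i | i) <;> simp [(hρ _).le])
  rw [gramMat_sumElim hk, add_zero, PosDef.fromBlocks₁₁ _ _ hA] at hblock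
  have hschur := hblock.diag_nonneg (i := ())
  rwa [Matrix.sub_apply, of_apply, conjTranspose_replicateCol_mul_mul_replicateCol_apply,
    ← postVar_eq_sub_dotProduct hk] at hschur

theorem postVar_le_diag (hk : k.PosSemidef) (hρ : ∀ x, 0 ≤ ρ2 x) (X : List ι) (x : ι) :
    postVar k ρ2 X x ≤ k x x := by
  rw [postVar_eq_sub_dotProduct hk, sub_le_self_iff]
  have h := ((posSemidef_gramMat hk X.get fun i => hρ (X.get i)).inv).dotProduct_mulVec_nonneg
    fun i => k (X.get i) x
  rwa [star_trivial] at h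

theorem postVar_le_of_sublist (hk : k.PosSemidef) (hρ : ∀ x, 0 < ρ2 x) {X Y : List ι}
    (h : X.Sublist Y) (x : ι) : postVar k ρ2 Y x ≤ postVar k ρ2 X x := by
  obtain ⟨f, hf⟩ := List.sublist_iff_exists_fin_orderEmbedding_get_eq.mp h
  have hX : X.get = Y.get ∘ f.toEmbedding := funext hf
  have hA := posDef_gramMat hk Y.get (d := ρ2 ∘ Y.get) fun i => hρ (Y.get i)
  rw [postVar_eq_sub_dotProduct hk, postVar_eq_sub_dotProduct hk, hX, ← Function.comp_assoc,
    ← gramMat_submatrix]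
  exact sub_le_sub_left (hA.dotProduct_inv_mulVec_submatrix_le f.toEmbedding _) _

theorem exists_equiv_get_append_singleton (X : List ι) (x : ι) :
    ∃ e : Fin X.length ⊕ Unit ≃ Fin (X ++ [x]).length,
      (X ++ [x]).get ∘ e = Sum.elim X.get fun _ => x := by
  refine ⟨(Equiv.sumCongr (Equiv.refl _) finOneEquiv.symm).trans
    (finSumFinEquiv.trans (finCongr (by simp))), ?_⟩
  funext i
  rcases i with i | _
  · simp [List.getElem_append_left]
  · simp

theorem det_gramMat_append_singleton (hk : k.PosSemidef) (hρ : ∀ x, 0 < ρ2 x) (X : List ι)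
    (x : ι) :
    (gramMat k (X ++ [x]).get (ρ2 ∘ (X ++ [x]).get)).det =
      (gramMat k X.get (ρ2 ∘ X.get)).det * (postVar k ρ2 X x + ρ2 x) := by
  obtain ⟨e, he⟩ := exists_equiv_get_append_singleton X x
  have := (posDef_gramMat hk X.get (d := ρ2 ∘ X.get) fun i => hρ (X.get i)).isUnit.invertible
  rw [← det_submatrix_equiv_self e, ← Equiv.coe_toEmbedding, gramMat_submatrix,
    Function.comp_assoc, Equiv.coe_toEmbedding, he, Sum.comp_elim,
    show (ρ2 ∘ fun _ : Unit => x) = fun _ => ρ2 x from rfl, gramMat_sumElim hk,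
    det_fromBlocks₁₁, invOf_eq_nonsing_inv, det_unique (_ - _), Matrix.sub_apply, of_apply,
    conjTranspose_replicateCol_mul_mul_replicateCol_apply, postVar_eq_sub_dotProduct hk]
  ring

theorem infoDet_eq_det_div (hρ : ∀ x, 0 < ρ2 x) (X : List ι) :
    infoDet k ρ2 X = (gramMat k X.get (ρ2 ∘ X.get)).det / (X.map ρ2).prod := by
  have hP : (noiseMat ρ2 X).det = (X.map ρ2).prod := by
    simp [noiseMat, det_diagonal]
  have hPunit : IsUnit (noiseMat ρ2 X).det := by
    rw [hP]
    exact (List.prod_pos (by simpa using fun z _ => hρ z)).ne'.isUnit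
  rw [infoDet, ← nonsing_inv_mul _ hPunit, ← Matrix.mul_add, det_mul, det_nonsing_inv,
    Ring.inverse_eq_inv', hP, add_comm, kerMat_add_noiseMat, inv_mul_eq_div]

theorem infoDet_append_singleton (hk : k.PosSemidef) (hρ : ∀ x, 0 < ρ2 x) (X : List ι)
    (x : ι) :
    infoDet k ρ2 (X ++ [x]) = infoDet k ρ2 X * (1 + postVar k ρ2 X x / ρ2 x) := by
  rw [infoDet_eq_det_div hρ, infoDet_eq_det_div hρ, det_gramMat_append_singleton hk hρ,
    List.map_append, List.prod_append, List.map_singleton, List.prod_singleton,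
    one_add_div (hρ x).ne', div_mul_div_comm, add_comm (ρ2 x)]

theorem le_maxInfoGain [Finite ι] [DecidableEq ι] (S : Finset ι) {n : ℕ} {X : List ι}
    (hlen : X.length ≤ n) (hXS : ∀ x ∈ X, x ∈ S) :
    (1 / 2) * Real.log (infoDet k ρ2 X) ≤ maxInfoGain k ρ2 S n := by
  refine le_csSup ?_ ⟨X, hlen, hXS, rfl⟩
  refine (((List.finite_length_le ι n).image
    fun Y => (1 / 2) * Real.log (infoDet k ρ2 Y)).bddAbove).mono ?_
  rintro _ ⟨Y, hY, -, rfl⟩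
  exact ⟨Y, hY, rfl⟩

variable {pick : List ι → ι}

@[simp]
theorem length_greedyList (n : ℕ) : (greedyList pick n).length = n := by
  induction n with
  | zero => rfl
  | succ n ih => simp [greedyList, ih]

theorem greedyList_subset {S : Finset ι} (hpick : ∀ D, pick D ∈ S) (n : ℕ) :
    ∀ x ∈ greedyList pick n, x ∈ S := by
  induction n with
  | zero => simp [greedyList]
  | succ n ih =>
    simp only [greedyList, List.mem_append, List.mem_singleton]
    rintro x (hx | rfl)
    exacts [ih x hx, hpick _]

theorem greedyList_prefix {i j : ℕ} (h : i ≤ j) : greedyList pick i <+: greedyList pick j := by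
  induction j, h using Nat.le_induction with
  | base => exact List.prefix_refl _
  | succ j _ ih => exact ih.trans (List.prefix_append _ _)

theorem infoDet_greedyList (hk : k.PosSemidef) (hρ : ∀ x, 0 < ρ2 x) (n : ℕ) :
    infoDet k ρ2 (greedyList pick n) = ∏ i ∈ Finset.range n,
      (1 + postVar k ρ2 (greedyList pick i) (pick (greedyList pick i)) /
        ρ2 (pick (greedyList pick i))) := by
  induction n with
  | zero => exact det_fin_zero
  | succ n ih => rw [Finset.prod_range_succ, ← ih, greedyList, infoDet_append_singleton hk hρ]

theorem pow_le_infoDet_greedyList_append (hk : k.PosSemidef) (hρ : ∀ x, 0 < ρ2 x)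
    {S : Finset ι}
    (hpick : ∀ D, ∀ x ∈ S, postVar k ρ2 D x / ρ2 x ≤ postVar k ρ2 D (pick D) / ρ2 (pick D))
    {x : ι} (hx : x ∈ S) (n : ℕ) :
    (1 + postVar k ρ2 (greedyList pick n) x / ρ2 x) ^ (n + 1) ≤
      infoDet k ρ2 (greedyList pick n ++ [x]) := by
  set t := postVar k ρ2 (greedyList pick n) x / ρ2 x
  have ht : 0 ≤ t := div_nonneg (postVar_nonneg hk hρ _ x) (hρ x).le
  rw [infoDet_append_singleton hk hρ, infoDet_greedyList hk hρ, pow_succ]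
  gcongr
  calc (1 + t) ^ n = ∏ _i ∈ Finset.range n, (1 + t) := by simp
    _ ≤ _ := Finset.prod_le_prod (fun _ _ => by linarith) fun i hi => ?_
  refine (add_le_add_iff_left 1).mpr ?_
  calc t ≤ postVar k ρ2 (greedyList pick i) x / ρ2 x :=
        (div_le_div_iff_of_pos_right (hρ x)).mpr <| postVar_le_of_sublist hk hρ
          (greedyList_prefix (Finset.mem_range.mp hi).le).sublist x
    _ ≤ _ := hpick _ x hx

end

theorem le_add_mul_log_one_add_div {a ρ : ℝ} (hρ : 0 < ρ) (ha : 0 ≤ a) :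
    a ≤ (ρ + a) * Real.log (1 + a / ρ) := by
  have hlog := Real.one_sub_inv_le_log_of_pos (x := 1 + a / ρ) (by positivity)
  calc a = (ρ + a) * (1 - (1 + a / ρ)⁻¹) := by field_simp; ring
    _ ≤ (ρ + a) * Real.log (1 + a / ρ) := by gcongr

theorem exists_uniform_covering_batch_general [Fintype ι] [DecidableEq ι]
    (k : Matrix ι ι ℝ) (ρ2 : ι → ℝ)
    (hk : k.PosSemidef) (hρ : ∀ x, 0 < ρ2 x)
    (S : Finset ι) (hS : S.Nonempty) (n : ℕ) :
    ∃ B : List ι, B.length = n ∧ (∀ z ∈ B, z ∈ S) ∧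
      ∀ x' ∈ S, postVar k ρ2 B x' ≤
        2 * (⨆ z : ι, (k z z + ρ2 z)) * (maxInfoGain k ρ2 S (n + 1) / (n + 1)) := by
  choose pick hpickS hpickMax using
    fun D => S.exists_max_image (fun x => postVar k ρ2 D x / ρ2 x) hS
  refine ⟨greedyList pick n, length_greedyList n, greedyList_subset hpickS n, fun x hx => ?_⟩
  set v := postVar k ρ2 (greedyList pick n) x
  have hv : 0 ≤ v := postVar_nonneg hk hρ _ x
  have hvρ : 0 ≤ v / ρ2 x := div_nonneg hv (hρ x).le
  have hσ : ρ2 x + v ≤ ⨆ z : ι, (k z z + ρ2 z) := by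
    linarith [postVar_le_diag hk (fun z => (hρ z).le) (greedyList pick n) x,
      le_ciSup (Set.finite_range fun z => k z z + ρ2 z).bddAbove x]
  have hγ : (n + 1) / 2 * Real.log (1 + v / ρ2 x) ≤ maxInfoGain k ρ2 S (n + 1) := by
    have hXS : ∀ z ∈ greedyList pick n ++ [x], z ∈ S := by
      simpa [or_imp, forall_and, hx] using greedyList_subset hpickS n
    calc (n + 1) / 2 * Real.log (1 + v / ρ2 x)
        = 1 / 2 * Real.log ((1 + v / ρ2 x) ^ (n + 1)) := by rw [Real.log_pow]; push_cast; ring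
      _ ≤ 1 / 2 * Real.log (infoDet k ρ2 (greedyList pick n ++ [x])) := by
          gcongr
          exact pow_le_infoDet_greedyList_append hk hρ hpickMax hx n
      _ ≤ maxInfoGain k ρ2 S (n + 1) := le_maxInfoGain S (by simp) hXS
  calc v ≤ (ρ2 x + v) * Real.log (1 + v / ρ2 x) := le_add_mul_log_one_add_div (hρ x) hv
    _ ≤ (⨆ z : ι, (k z z + ρ2 z)) * (2 * (maxInfoGain k ρ2 S (n + 1) / (n + 1))) := by
        refine mul_le_mul hσ ?_ (Real.log_nonneg (by linarith)) (by linarith [hρ x])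
        rw [mul_div_assoc', le_div_iff₀ (by positivity)]
        linarith
    _ = _ := by ring

/-- For any `n ≥ 0` there exists a multiset `B ⊆ S` with `|B| = n` such that
for all `x' ∈ S`, `Var(f_{x'} ∣ y_B) ≤ 2 σ̃² · γ_{n+1} / (n+1)`,
where `σ̃² = max_z (k(z,z) + ρ²(z))`. -/
theorem exists_uniform_covering_batch [Fintype ι] [DecidableEq ι] [Nonempty ι]
    (k : Matrix ι ι ℝ) (ρ2 : ι → ℝ)
    (hk : k.PosSemidef) (hρ : ∀ x, 0 < ρ2 x)
    (S : Finset ι) (hS : S.Nonempty) (n : ℕ) :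
    ∃ B : List ι, B.length = n ∧ (∀ z ∈ B, z ∈ S) ∧
      ∀ x' ∈ S, postVar k ρ2 B x' ≤
        2 * (⨆ z : ι, (k z z + ρ2 z)) * (maxInfoGain k ρ2 S (n + 1) / (n + 1)) :=
  exists_uniform_covering_batch_general k ρ2 hk hρ S hS n

end TransductiveAL
end

section
/- In the Gaussian kernel setting with finite sample space S such that the covariance matrix K_SS = Var(f_S) is invertible, let ε > 0 and let B ⊆ S be a multiset such that for every x' ∈ S, Var(f_{x'} | y_B) ≤ ε · λ_min²(K_SS) / (|S|² σ⁴), where σ² = max_{x∈𝒳} k(x,x) and λ_min denotes the smallest eigenvalue. Then for every x ∈ 𝒳, Var(f_x | y_B) ≤ Var(f_x | f_S) + ε. -/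
/-!
Let `w = K_SS⁻¹ k_{Sx}`, so that `E[f_x ∣ f_S] = wᵀ f_S`. Since `B ⊆ S`, the observations `y_B`
see `f` only through `f_S`, so the residual `f_x - wᵀ f_S` is independent of `y_B` and
`Var(f_x ∣ y_B) = Var(f_x ∣ f_S) + wᵀ Var(f_S ∣ y_B) w`.
The posterior covariance `Var(f_S ∣ y_B)` is positive semidefinite with diagonal at most
`δ = ε λ_min² / (|S|² σ⁴)`, so all its entries are at most `δ` in absolute value and the second
term is at most `δ |S| ‖w‖²`. Finally `λ_min ‖w‖ ≤ ‖K_SS w‖ = ‖k_{Sx}‖ ≤ √|S| σ²`.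
-/

open Matrix Real

open TransductiveAL

namespace Matrix

variable {m : Type*}

theorem PosSemidef.apply_sq_le_mul {M : Matrix m m ℝ} (hM : M.PosSemidef) (i j : m) :
    M i j ^ 2 ≤ M i i * M j j := by
  have hdet := (hM.submatrix ![i, j]).det_nonneg
  have hsymm : M j i = M i j := by simpa using hM.1.apply i j
  rw [det_fin_two] at hdet
  simp only [submatrix_apply, Matrix.cons_val_zero, Matrix.cons_val_one, hsymm] at hdet
  rw [sq]
  linarith

theorem PosSemidef.abs_apply_le {M : Matrix m m ℝ} (hM : M.PosSemidef) {δ : ℝ}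
    (hδ : ∀ i, M i i ≤ δ) (i j : m) : |M i j| ≤ δ := by
  have hδ0 : 0 ≤ δ := hM.diag_nonneg.trans (hδ i)
  refine abs_le_of_sq_le_sq ((hM.apply_sq_le_mul i j).trans ?_) hδ0
  rw [sq]
  exact mul_le_mul (hδ i) (hδ j) hM.diag_nonneg hδ0

variable [Fintype m]

theorem dotProduct_sq_le_dotProduct_self_mul (v w : m → ℝ) :
    (v ⬝ᵥ w) ^ 2 ≤ (v ⬝ᵥ v) * (w ⬝ᵥ w) := by
  simpa only [dotProduct, ← sq] using Finset.sum_mul_sq_le_sq_mul_sq Finset.univ v w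

theorem dotProduct_mulVec_le_of_abs_apply_le {M : Matrix m m ℝ} {δ : ℝ} (hδ : 0 ≤ δ)
    (hM : ∀ i j, |M i j| ≤ δ) (w : m → ℝ) :
    w ⬝ᵥ (M *ᵥ w) ≤ δ * Fintype.card m * (w ⬝ᵥ w) := by
  calc w ⬝ᵥ (M *ᵥ w) = ∑ i, ∑ j, w i * M i j * w j := by
        simp only [dotProduct, mulVec, Finset.mul_sum, mul_assoc]
    _ ≤ ∑ i, ∑ j, δ * (|w i| * |w j|) := by
        refine Finset.sum_le_sum fun i _ => Finset.sum_le_sum fun j _ => ?_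
        calc w i * M i j * w j ≤ |w i| * |M i j| * |w j| := by
              rw [← abs_mul, ← abs_mul]; exact le_abs_self _
          _ ≤ |w i| * δ * |w j| := by gcongr; exact hM i j
          _ = δ * (|w i| * |w j|) := by ring
    _ = δ * (∑ i, |w i|) ^ 2 := by
        rw [sq, Finset.sum_mul_sum, Finset.mul_sum]
        simp_rw [Finset.mul_sum]
    _ ≤ δ * (Fintype.card m * ∑ i, |w i| ^ 2) := by
        gcongr; exact sq_sum_le_card_mul_sum_sq
    _ = δ * Fintype.card m * (w ⬝ᵥ w) := by
        simp only [sq_abs, dotProduct, ← sq, mul_assoc]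

theorem PosSemidef.sum_apply_sq_le_card_mul_iSup_sq {M : Matrix m m ℝ} (hM : M.PosSemidef)
    (S : Finset m) (x : m) : ∑ s ∈ S, M s x ^ 2 ≤ S.card * (⨆ z, M z z) ^ 2 := by
  have hle : ∀ z, M z z ≤ ⨆ z, M z z := le_ciSup (Set.finite_range _).bddAbove
  calc ∑ s ∈ S, M s x ^ 2 ≤ ∑ _s ∈ S, (⨆ z, M z z) ^ 2 := by
        refine Finset.sum_le_sum fun s _ => (hM.apply_sq_le_mul s x).trans ?_
        rw [sq]
        exact mul_le_mul (hle s) (hle x) hM.diag_nonneg (hM.diag_nonneg.trans (hle s))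
    _ = S.card * (⨆ z, M z z) ^ 2 := by rw [Finset.sum_const, nsmul_eq_mul]

theorem dotProduct_sub_mul_mul_transpose_mulVec {p : Type*} [Fintype p]
    (K : Matrix m m ℝ) (C : Matrix m p ℝ) (G : Matrix p p ℝ) (w : m → ℝ) :
    w ⬝ᵥ ((K - C * G * Cᵀ) *ᵥ w) = w ⬝ᵥ (K *ᵥ w) - (Cᵀ *ᵥ w) ⬝ᵥ (G *ᵥ (Cᵀ *ᵥ w)) := by
  rw [sub_mulVec, dotProduct_sub, ← mulVec_mulVec, ← mulVec_mulVec, dotProduct_mulVec w C,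
    mulVec_transpose]

variable [DecidableEq m]

theorem minEig_le_of_mem_spectrum (M : Matrix m m ℝ) {r : ℝ} (hr : r ∈ spectrum ℝ M) :
    minEig M ≤ r :=
  csInf_le M.finite_real_spectrum.bddBelow hr

theorem PosSemidef.minEig_nonneg {M : Matrix m m ℝ} (hM : M.PosSemidef) : 0 ≤ minEig M := by
  refine Real.sInf_nonneg fun r hr => ?_
  rw [hM.1.spectrum_real_eq_range_eigenvalues] at hr
  obtain ⟨i, rfl⟩ := hr
  exact hM.eigenvalues_nonneg i

open MatrixOrder in
theorem IsHermitian.minEig_mul_dotProduct_le {M : Matrix m m ℝ} (hM : M.IsHermitian)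
    (w : m → ℝ) : minEig M * (w ⬝ᵥ w) ≤ w ⬝ᵥ (M *ᵥ w) := by
  have hle : algebraMap ℝ (Matrix m m ℝ) (minEig M) ≤ M :=
    (algebraMap_le_iff_le_spectrum (ha := hM.isSelfAdjoint)).2 fun _ =>
      M.minEig_le_of_mem_spectrum
  simpa [sub_mulVec, Algebra.algebraMap_eq_smul_one, smul_mulVec, dotProduct_sub] using
    (le_iff.1 hle).dotProduct_mulVec_nonneg w

theorem PosSemidef.minEig_sq_mul_dotProduct_le {M : Matrix m m ℝ} (hM : M.PosSemidef)
    {w v : m → ℝ} (hw : M *ᵥ w = v) : minEig M ^ 2 * (w ⬝ᵥ w) ≤ v ⬝ᵥ v := by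
  have hww : 0 ≤ w ⬝ᵥ w := by simpa using dotProduct_star_self_nonneg w
  rcases hww.eq_or_lt with hw0 | hwpos
  · rw [← hw0, mul_zero]
    simpa using dotProduct_star_self_nonneg v
  have hlow : minEig M * (w ⬝ᵥ w) ≤ w ⬝ᵥ v := hw ▸ hM.1.minEig_mul_dotProduct_le w
  refine le_of_mul_le_mul_right ?_ hwpos
  calc minEig M ^ 2 * (w ⬝ᵥ w) * (w ⬝ᵥ w) = (minEig M * (w ⬝ᵥ w)) ^ 2 := by ring
    _ ≤ (w ⬝ᵥ v) ^ 2 := pow_le_pow_left₀ (mul_nonneg hM.minEig_nonneg hww) hlow 2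
    _ ≤ (w ⬝ᵥ w) * (v ⬝ᵥ v) := dotProduct_sq_le_dotProduct_self_mul w v
    _ = (v ⬝ᵥ v) * (w ⬝ᵥ w) := mul_comm _ _

end Matrix

namespace TransductiveAL

variable {ι : Type*} {k : Matrix ι ι ℝ}

noncomputable def postCovMat (k : Matrix ι ι ℝ) (ρ2 : ι → ℝ) (B : List ι) : Matrix ι ι ℝ :=
  Matrix.of fun x x' => postCov k ρ2 B x x'

theorem postCovMat_eq (hk : k.IsSymm) (ρ2 : ι → ℝ) (B : List ι) :
    postCovMat k ρ2 B = k - k.submatrix id B.get * (kerMat k B + noiseMat ρ2 B)⁻¹ *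
      (k.submatrix id B.get)ᵀ := by
  ext x x'
  simp only [postCovMat, postCov, of_apply, Matrix.sub_apply, Matrix.mul_apply, submatrix_apply,
    id, transpose_apply, Finset.sum_mul, hk.apply x' (B.get _)]
  rw [Finset.sum_comm]

theorem postCovMat_posSemidef [Fintype ι] [DecidableEq ι] (hk : k.PosSemidef) {ρ2 : ι → ℝ}
    (hρ : ∀ x, 0 < ρ2 x) (B : List ι) : (postCovMat k ρ2 B).PosSemidef := by
  have hW : (kerMat k B + noiseMat ρ2 B).PosDef :=
    (posDef_diagonal_iff.2 fun _ => hρ _).posSemidef_add (hk.submatrix B.get)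
  have := hW.isUnit.invertible
  have hsymm : k.IsSymm := isHermitian_iff_isSymm.1 hk.1
  -- the Schur complement of `W` in the joint covariance matrix of `(f, y_B)`
  rw [postCovMat_eq hsymm, ← conjTranspose_eq_transpose_of_trivial,
    ← PosDef.fromBlocks₂₂ _ _ hW]
  have hblocks : fromBlocks k (k.submatrix id B.get) (k.submatrix id B.get)ᴴ
      (kerMat k B + noiseMat ρ2 B) = k.submatrix (Sum.elim id B.get) (Sum.elim id B.get) +
        diagonal (Sum.elim 0 fun i => ρ2 (B.get i)) := by
    rw [← fromBlocks_diagonal]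
    ext (x | i) (x' | j) <;> simp [kerMat, noiseMat, hsymm.apply]
  rw [hblocks]
  exact (hk.submatrix _).add (PosSemidef.diagonal (by rintro (x | i) <;> simp [(hρ _).le]))

section

variable [DecidableEq ι]

noncomputable def condMeanWeights (k : Matrix ι ι ℝ) (S : Finset ι) (x : ι) : S → ℝ :=
  (kerMatOn k S)⁻¹ *ᵥ fun s : S => k s x

theorem kerMatOn_mulVec_condMeanWeights {S : Finset ι} (hS : IsUnit (kerMatOn k S).det)
    (x : ι) : kerMatOn k S *ᵥ condMeanWeights k S x = fun s : S => k s x := by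
  rw [condMeanWeights, mulVec_mulVec, mul_nonsing_inv _ hS, one_mulVec]

theorem postVar_eq_noiselessCondVar_add (hk : k.IsSymm) (ρ2 : ι → ℝ) {S : Finset ι}
    (hS : IsUnit (kerMatOn k S).det) {B : List ι} (hB : ∀ z ∈ B, z ∈ S) (x : ι) :
    postVar k ρ2 B x = noiselessCondVar k S x + condMeanWeights k S x ⬝ᵥ
      ((postCovMat k ρ2 B).submatrix (↑) (↑) *ᵥ condMeanWeights k S x) := by
  set w := condMeanWeights k S x
  set G := (kerMat k B + noiseMat ρ2 B)⁻¹
  set C : Matrix S (Fin B.length) ℝ := k.submatrix (↑) B.get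
  set u : Fin B.length → ℝ := fun i => k (B.get i) x
  have hKw := kerMatOn_mulVec_condMeanWeights hS x
  have hpost : (postCovMat k ρ2 B).submatrix (↑) (↑) = kerMatOn k S - C * G * Cᵀ := by
    rw [postCovMat_eq hk]; rfl
  -- the columns of `Cᵀ` are rows of `K_SS`, because `B ⊆ S`
  have hCw : Cᵀ *ᵥ w = u := by
    funext i
    simpa [C, u, mulVec, dotProduct, kerMatOn, hk.apply] using
      congrFun hKw ⟨B.get i, hB _ (B.get_mem i)⟩
  have hvar : postVar k ρ2 B x = k x x - u ⬝ᵥ (G *ᵥ u) := by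
    simp [postVar, postCov, u, G, dotProduct, mulVec, Finset.mul_sum, mul_assoc, hk.apply x]
  have hcond : noiselessCondVar k S x = k x x - (fun s : S => k s x) ⬝ᵥ w := by
    simp [noiselessCondVar, w, condMeanWeights, dotProduct, mulVec, Finset.mul_sum, mul_assoc,
      hk.apply x]
  rw [hpost, dotProduct_sub_mul_mul_transpose_mulVec, hKw, hCw, hvar, hcond, dotProduct_comm w]
  ring

end

theorem postVar_le_noiselessCondVar_add_of_small_on_S_general [Fintype ι] [DecidableEq ι]
    (k : Matrix ι ι ℝ) (ρ2 : ι → ℝ)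
    (hk : k.PosSemidef) (hρ : ∀ x, 0 < ρ2 x)
    (S : Finset ι) (hS : IsUnit (kerMatOn k S).det)
    (ε : ℝ) (hε : 0 < ε)
    (B : List ι) (hB : ∀ z ∈ B, z ∈ S)
    (hBvar : ∀ x' ∈ S, postVar k ρ2 B x' ≤
      ε * (minEig (kerMatOn k S)) ^ 2 / ((S.card : ℝ) ^ 2 * (⨆ z : ι, k z z) ^ 2)) :
    ∀ x : ι, postVar k ρ2 B x ≤ noiselessCondVar k S x + ε := by
  intro x
  set w := condMeanWeights k S x
  set lmin := minEig (kerMatOn k S)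
  set σ2 := ⨆ z : ι, k z z
  set δ := ε * lmin ^ 2 / ((S.card : ℝ) ^ 2 * σ2 ^ 2)
  have hpostS := (postCovMat_posSemidef hk hρ B).submatrix ((↑) : S → ι)
  have hquad : w ⬝ᵥ ((postCovMat k ρ2 B).submatrix (↑) (↑) *ᵥ w) ≤ δ * S.card * (w ⬝ᵥ w) := by
    simpa using dotProduct_mulVec_le_of_abs_apply_le (by positivity)
      (hpostS.abs_apply_le fun s => hBvar s s.2) w
  have hw : lmin ^ 2 * (w ⬝ᵥ w) ≤ S.card * σ2 ^ 2 :=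
    ((hk.submatrix _).minEig_sq_mul_dotProduct_le (kerMatOn_mulVec_condMeanWeights hS x)).trans
      (by simpa only [dotProduct, ← sq, Finset.sum_coe_sort S fun s => k s x ^ 2] using
        hk.sum_apply_sq_le_card_mul_iSup_sq S x)
  rw [postVar_eq_noiselessCondVar_add (isHermitian_iff_isSymm.1 hk.1) ρ2 hS hB x]
  refine add_le_add_right (hquad.trans ?_) _
  -- `a / a ≤ 1` holds also for `a = 0`, so `S = ∅` and `σ2 = 0` need no separate treatment
  calc δ * S.card * (w ⬝ᵥ w) = ε * (lmin ^ 2 * (w ⬝ᵥ w) * S.card) / (S.card ^ 2 * σ2 ^ 2) := by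
        ring
    _ ≤ ε * (S.card * σ2 ^ 2 * S.card) / (S.card ^ 2 * σ2 ^ 2) := by gcongr
    _ = ε * ((S.card ^ 2 * σ2 ^ 2) / (S.card ^ 2 * σ2 ^ 2)) := by ring
    _ ≤ ε := mul_le_of_le_one_right hε.le (div_self_le_one _)

/-- If `K_SS` is invertible, `ε > 0`, and `B ⊆ S` is a multiset with
`Var(f_{x'} ∣ y_B) ≤ ε λ_min²(K_SS) / (|S|² σ⁴)` for all `x' ∈ S` (σ² = max_z k(z,z)),
then `Var(f_x ∣ y_B) ≤ Var(f_x ∣ f_S) + ε` for every `x ∈ 𝒳`. -/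
theorem postVar_le_noiselessCondVar_add_of_small_on_S [Fintype ι] [DecidableEq ι] [Nonempty ι]
    (k : Matrix ι ι ℝ) (ρ2 : ι → ℝ)
    (hk : k.PosSemidef) (hρ : ∀ x, 0 < ρ2 x)
    (S : Finset ι) (hS : IsUnit (kerMatOn k S).det)
    (ε : ℝ) (hε : 0 < ε)
    (B : List ι) (hB : ∀ z ∈ B, z ∈ S)
    (hBvar : ∀ x' ∈ S, postVar k ρ2 B x' ≤
      ε * (minEig (kerMatOn k S)) ^ 2 / ((S.card : ℝ) ^ 2 * (⨆ z : ι, k z z) ^ 2)) :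
    ∀ x : ι, postVar k ρ2 B x ≤ noiselessCondVar k S x + ε :=
  postVar_le_noiselessCondVar_add_of_small_on_S_general k ρ2 hk hρ S hS ε hε B hB hBvar

end TransductiveAL
end

section
/- Greedy maximization under approximate submodularity: Let F be a non-negative, monotone set function on subsets of a finite ground set 𝒮 with F(∅) = 0, let k ≥ 1, let B'_k = (x_1, …, x_k) be the greedy sequence defined by x_i ∈ argmax_{x∈𝒮} [F({x_1,…,x_{i-1}} ∪ {x}) − F({x_1,…,x_{i-1}})], and let κ(k) be the submodularity ratio of F up to cardinality k: κ(k) = min over B ⊆ B'_k and X ⊆ 𝒮 with |X| ≤ k and B ∩ X = ∅ of ( Σ_{x∈X} [F(B∪{x}) − F(B)] ) / ( F(B∪X) − F(B) ), with 0/0 interpreted as 1. Then F(B'_k) ≥ (1 − e^{−κ(k)}) · max_{B⊆𝒮, |B|=k} F(B). -/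
/-!
Let `S i = {x₀, …, x_{i-1}}` be the greedy prefixes and `B` any set of size `b`. Applying the
submodularity ratio to `S i` and `X = B \ S i`, monotonicity and the greedy choice give
`κ (F B - F (S i)) ≤ b (F (S (i+1)) - F (S i))`, so the gap `F B - F (S i)` shrinks by a factor
`1 - κ / b` at each step. After `b` steps it is at most `(1 - κ / b) ^ b F B ≤ e^{-κ} F B`.
-/

open Finset Real

namespace Greedy

variable {α : Type*} [DecidableEq α] (F : Finset α → ℝ)

noncomputable def marginalRatio (B X : Finset α) : ℝ :=
  if F (B ∪ X) - F B = 0 then 1 else (∑ x ∈ X, (F (B ∪ {x}) - F B)) / (F (B ∪ X) - F B)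

/-- The paper's `κ(b)` is `submodularityRatio F B'_b b`. -/
noncomputable def submodularityRatio (T : Finset α) (b : ℕ) : ℝ :=
  sInf {r : ℝ | ∃ B X : Finset α,
    B ⊆ T ∧ X.card ≤ b ∧ Disjoint B X ∧ r = marginalRatio F B X}

variable {F}

lemma sum_marginal_nonneg (hmono : Monotone F) (B X : Finset α) :
    0 ≤ ∑ x ∈ X, (F (B ∪ {x}) - F B) :=
  sum_nonneg fun _ _ => sub_nonneg.2 (hmono subset_union_left)

lemma marginalRatio_nonneg (hmono : Monotone F) (B X : Finset α) : 0 ≤ marginalRatio F B X := by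
  unfold marginalRatio
  split_ifs
  · exact zero_le_one
  · exact div_nonneg (sum_marginal_nonneg hmono B X) (sub_nonneg.2 (hmono subset_union_left))

lemma mul_sub_le_sum_marginal {κ : ℝ} {B X : Finset α} (hmono : Monotone F)
    (hκ : κ ≤ marginalRatio F B X) :
    κ * (F (B ∪ X) - F B) ≤ ∑ x ∈ X, (F (B ∪ {x}) - F B) := by
  unfold marginalRatio at hκ
  split_ifs at hκ with hzero
  · rw [hzero, mul_zero]
    exact sum_marginal_nonneg hmono B X
  · have hpos : 0 < F (B ∪ X) - F B :=
      (sub_nonneg.2 (hmono subset_union_left)).lt_of_ne' hzero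
    exact (le_div_iff₀ hpos).1 hκ

section submodularityRatio

variable {T : Finset α} {b : ℕ}

lemma bddBelow_marginalRatios (hmono : Monotone F) :
    BddBelow {r : ℝ | ∃ B X : Finset α,
      B ⊆ T ∧ X.card ≤ b ∧ Disjoint B X ∧ r = marginalRatio F B X} :=
  ⟨0, by rintro r ⟨B, X, -, -, -, rfl⟩; exact marginalRatio_nonneg hmono B X⟩

lemma submodularityRatio_le_marginalRatio {B X : Finset α} (hmono : Monotone F) (hB : B ⊆ T)
    (hX : X.card ≤ b) (hBX : Disjoint B X) : submodularityRatio F T b ≤ marginalRatio F B X :=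
  csInf_le (bddBelow_marginalRatios hmono) ⟨B, X, hB, hX, hBX, rfl⟩

lemma submodularityRatio_le_one (hmono : Monotone F) : submodularityRatio F T b ≤ 1 := by
  simpa [marginalRatio] using
    submodularityRatio_le_marginalRatio hmono (empty_subset T) (by simp) (disjoint_empty_left ∅)

lemma submodularityRatio_nonneg (hmono : Monotone F) : 0 ≤ submodularityRatio F T b :=
  le_csInf ⟨_, ⟨∅, ∅, empty_subset T, by simp, disjoint_empty_left ∅, rfl⟩⟩
    (by rintro r ⟨B, X, -, -, -, rfl⟩; exact marginalRatio_nonneg hmono B X)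

end submodularityRatio

lemma ratio_mul_gap_le_card_mul_gain {κ : ℝ} {b : ℕ} {S Bs : Finset α} {y : α}
    (hmono : Monotone F) (hκ0 : 0 ≤ κ) (hκ : κ ≤ marginalRatio F S (Bs \ S))
    (hBs : Bs.card ≤ b) (hgreedy : ∀ x, F (S ∪ {x}) - F S ≤ F (S ∪ {y}) - F S) :
    κ * (F Bs - F S) ≤ b * (F (S ∪ {y}) - F S) := by
  have hcard : ((Bs \ S).card : ℝ) ≤ b := by
    exact_mod_cast (card_le_card sdiff_subset).trans hBs
  calc κ * (F Bs - F S)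
      ≤ κ * (F (S ∪ Bs \ S) - F S) := by
        rw [union_sdiff_self_eq_union]
        exact mul_le_mul_of_nonneg_left (sub_le_sub_right (hmono subset_union_right) _) hκ0
    _ ≤ ∑ x ∈ Bs \ S, (F (S ∪ {x}) - F S) := mul_sub_le_sum_marginal hmono hκ
    _ ≤ ∑ _x ∈ Bs \ S, (F (S ∪ {y}) - F S) := sum_le_sum fun x _ => hgreedy x
    _ = (Bs \ S).card * (F (S ∪ {y}) - F S) := by rw [sum_const, nsmul_eq_mul]
    _ ≤ b * (F (S ∪ {y}) - F S) :=
        mul_le_mul_of_nonneg_right hcard (sub_nonneg.2 (hmono subset_union_left))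

lemma sub_le_pow_mul_of_forall_lt {g : ℕ → ℝ} {v r : ℝ} (hr : 0 ≤ r) :
    ∀ {n : ℕ}, (∀ i < n, v - g (i + 1) ≤ r * (v - g i)) → v - g n ≤ r ^ n * (v - g 0)
  | 0, _ => by simp
  | n + 1, h => calc
      v - g (n + 1) ≤ r * (v - g n) := h n n.lt_succ_self
      _ ≤ r * (r ^ n * (v - g 0)) :=
          mul_le_mul_of_nonneg_left (sub_le_pow_mul_of_forall_lt hr fun i hi => h i (by omega)) hr
      _ = r ^ (n + 1) * (v - g 0) := by ring

lemma image_range_add_one (xs : ℕ → α) (i : ℕ) :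
    (range (i + 1)).image xs = (range i).image xs ∪ {xs i} := by
  rw [range_add_one, image_insert, insert_eq, union_comm]

theorem gap_le_exp_neg_submodularityRatio_mul (hmono : Monotone F) {b : ℕ} (hb : 1 ≤ b)
    (xs : ℕ → α)
    (hgreedy : ∀ i < b, ∀ x : α,
      F ((range i).image xs ∪ {x}) - F ((range i).image xs) ≤
        F ((range i).image xs ∪ {xs i}) - F ((range i).image xs))
    {Bs : Finset α} (hBs : Bs.card ≤ b) :
    F Bs - F ((range b).image xs) ≤
      exp (-submodularityRatio F ((range b).image xs) b) * (F Bs - F ∅) := by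
  set κ := submodularityRatio F ((range b).image xs) b
  have hκ0 : 0 ≤ κ := submodularityRatio_nonneg hmono
  have hκb : κ ≤ b :=
    (submodularityRatio_le_one hmono).trans (by exact_mod_cast hb)
  have hb0 : (0 : ℝ) < b := by exact_mod_cast hb
  have hstep : ∀ i < b, F Bs - F ((range (i + 1)).image xs) ≤
      (1 - κ / b) * (F Bs - F ((range i).image xs)) := by
    intro i hi
    have hκi : κ ≤ marginalRatio F ((range i).image xs) (Bs \ (range i).image xs) :=
      submodularityRatio_le_marginalRatio hmono
        (image_subset_image (range_subset_range.2 hi.le))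
        ((card_le_card sdiff_subset).trans hBs) disjoint_sdiff
    have hgain := ratio_mul_gap_le_card_mul_gain hmono hκ0 hκi hBs (hgreedy i hi)
    rw [image_range_add_one, sub_mul, one_mul, div_mul_eq_mul_div]
    linarith [(div_le_iff₀' hb0).2 hgain]
  calc F Bs - F ((range b).image xs)
      ≤ (1 - κ / b) ^ b * (F Bs - F ((range 0).image xs)) :=
        sub_le_pow_mul_of_forall_lt (g := fun i => F ((range i).image xs))
          (sub_nonneg.2 ((div_le_one hb0).2 hκb)) hstep
    _ ≤ exp (-κ) * (F Bs - F ∅) := by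
        rw [range_zero, image_empty]
        exact mul_le_mul_of_nonneg_right (one_sub_div_pow_le_exp_neg hκb)
          (sub_nonneg.2 (hmono (empty_subset Bs)))

end Greedy

open Greedy in
theorem greedy_approx_of_submodularity_ratio_general {α : Type*} [DecidableEq α]
    (F : Finset α → ℝ) (hFnn : ∀ B, 0 ≤ F B)
    (hmono : ∀ ⦃B' B : Finset α⦄, B' ⊆ B → F B' ≤ F B)
    (b : ℕ) (hb : 1 ≤ b)
    (xs : ℕ → α)
    (hgreedy : ∀ i < b, ∀ x : α,
      F ((Finset.range i).image xs ∪ {x}) - F ((Finset.range i).image xs) ≤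
        F ((Finset.range i).image xs ∪ {xs i}) - F ((Finset.range i).image xs))
    (κ : ℝ)
    (hκ : κ = sInf { r : ℝ | ∃ B X : Finset α,
      B ⊆ (Finset.range b).image xs ∧ X.card ≤ b ∧ Disjoint B X ∧
      r = if F (B ∪ X) - F B = 0 then 1
          else (∑ x ∈ X, (F (B ∪ {x}) - F B)) / (F (B ∪ X) - F B) }) :
    (1 - Real.exp (-κ)) * sSup { v : ℝ | ∃ B : Finset α, B.card = b ∧ v = F B } ≤
      F ((Finset.range b).image xs) := by
  change κ = submodularityRatio F ((range b).image xs) b at hκ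
  have hc : 0 ≤ 1 - exp (-κ) :=
    sub_nonneg.2 (exp_le_one_iff.2 (neg_nonpos.2 (hκ ▸ submodularityRatio_nonneg hmono)))
  rw [← smul_eq_mul, ← Real.sSup_smul_of_nonneg hc]
  refine Real.sSup_le ?_ (hFnn _)
  rintro _ ⟨_, ⟨Bs, hBs, rfl⟩, rfl⟩
  have hgap := gap_le_exp_neg_submodularityRatio_mul hmono hb xs hgreedy hBs.le
  rw [← hκ] at hgap
  show (1 - exp (-κ)) * F Bs ≤ _
  linarith [mul_nonneg (exp_pos (-κ)).le (hFnn ∅)]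

/-- greedy maximization under approximate submodularity: if `F` is a
non-negative monotone set function with `F ∅ = 0`, `B'_b = {x₁, …, x_b}` is the greedy
sequence, and `κ(b)` is the submodularity ratio of `F` up to cardinality `b` (with `0/0`
interpreted as `1`), then `F(B'_b) ≥ (1 − e^{−κ(b)}) · max_{|B| = b} F(B)`. -/
theorem greedy_approx_of_submodularity_ratio {α : Type*} [Fintype α] [DecidableEq α]
    (F : Finset α → ℝ) (hF0 : F ∅ = 0) (hFnn : ∀ B, 0 ≤ F B)
    (hmono : ∀ ⦃B' B : Finset α⦄, B' ⊆ B → F B' ≤ F B)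
    (b : ℕ) (hb : 1 ≤ b) (hbcard : b ≤ Fintype.card α)
    (xs : ℕ → α)
    (hgreedy : ∀ i < b, ∀ x : α,
      F ((Finset.range i).image xs ∪ {x}) - F ((Finset.range i).image xs) ≤
        F ((Finset.range i).image xs ∪ {xs i}) - F ((Finset.range i).image xs))
    (κ : ℝ)
    (hκ : κ = sInf { r : ℝ | ∃ B X : Finset α,
      B ⊆ (Finset.range b).image xs ∧ X.card ≤ b ∧ Disjoint B X ∧
      r = if F (B ∪ X) - F B = 0 then 1
          else (∑ x ∈ X, (F (B ∪ {x}) - F B)) / (F (B ∪ X) - F B) }) :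
    (1 - Real.exp (-κ)) * sSup { v : ℝ | ∃ B : Finset α, B.card = b ∧ v = F B } ≤
      F ((Finset.range b).image xs) :=
  greedy_approx_of_submodularity_ratio_general F hFnn hmono b hb xs hgreedy κ hκ
end

section
/- Law of total variance for Gaussian conditioning (identity used in the Markov-boundary lemma): in the Gaussian kernel setting with K_SS = Var(f_S) invertible, for every x ∈ 𝒳 and every multiset B ⊆ S of noisy observation points, Var(f_x | y_B) = Var(f_x | f_S) + zᵀ · Var(f_S | y_B) · z, where z = K_SS^{-1} K_{Sx} with K_{Sx} = Cov(f_S, f_x); the first term is the irreducible uncertainty and the second is the reducible (epistemic) uncertainty. -/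
open Matrix Real

namespace TransductiveAL

variable {ι : Type*}

/-! Put `z = K_SS⁻¹ K_Sx`, so that `K_SS z = K_Sx`. As `B ⊆ S`, the combination `∑ᵢ zᵢ k(·, sᵢ)`
of kernel columns agrees with `k(·, x)` on `B`, and the correction term of the Schur-complement
formula only sees a column through its values on `B`. Linearity of `postCov` in each argument
therefore gives `zᵀ Var(f_S ∣ y_B) z = Var(f_x ∣ y_B) − (k(x,x) − K_xS z)`, and the bracket is
`Var(f_x ∣ f_S)`. -/

section postCov

variable {κ : Type*} [Fintype κ] (k : Matrix ι ι ℝ) (ρ2 : ι → ℝ) (B : List ι)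

theorem sum_postCov_mul_eq {s : κ → ι} {w : κ → ℝ} {x : ι}
    (h : ∀ p ∈ B, ∑ j, k p (s j) * w j = k p x) (y : ι) :
    ∑ j, postCov k ρ2 B y (s j) * w j =
      postCov k ρ2 B y x - k y x + ∑ j, k y (s j) * w j := by
  have hcol : ∀ a c, ∑ j, k y (B.get a) * (kerMat k B + noiseMat ρ2 B)⁻¹ a c *
      k (B.get c) (s j) * w j =
        k y (B.get a) * (kerMat k B + noiseMat ρ2 B)⁻¹ a c * k (B.get c) x := by
    intro a c
    simp only [← h _ (B.get_mem c), Finset.mul_sum, mul_assoc]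
  simp only [postCov, sub_mul, Finset.sum_sub_distrib, Finset.sum_mul]
  rw [Finset.sum_comm]
  simp only [Finset.sum_comm (γ := κ), hcol]
  ring

theorem sum_mul_postCov_eq {s : κ → ι} {w : κ → ℝ} {x : ι}
    (h : ∀ p ∈ B, ∑ i, w i * k (s i) p = k x p) (x' : ι) :
    ∑ i, w i * postCov k ρ2 B (s i) x' =
      postCov k ρ2 B x x' - k x x' + ∑ i, w i * k (s i) x' := by
  have hrow : ∀ a c, ∑ i, w i * (k (s i) (B.get a) * (kerMat k B + noiseMat ρ2 B)⁻¹ a c *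
      k (B.get c) x') =
        k x (B.get a) * (kerMat k B + noiseMat ρ2 B)⁻¹ a c * k (B.get c) x' := by
    intro a c
    simp only [← h _ (B.get_mem a), Finset.sum_mul, mul_assoc]
  simp only [postCov, mul_sub, Finset.sum_sub_distrib, Finset.mul_sum]
  rw [Finset.sum_comm]
  simp only [Finset.sum_comm (γ := κ), hrow]
  ring

end postCov

theorem sum_kerMatOn_mul_inv_mulVec [DecidableEq ι] {k : Matrix ι ι ℝ} {S : Finset ι}
    (hS : IsUnit (kerMatOn k S).det) (x : ι) {p : ι} (hp : p ∈ S) :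
    ∑ j : S, k p j * ((kerMatOn k S)⁻¹ *ᵥ fun a : S => k a x) j = k p x := by
  have h : kerMatOn k S *ᵥ ((kerMatOn k S)⁻¹ *ᵥ fun a : S => k a x) = fun a : S => k a x := by
    rw [mulVec_mulVec, mul_nonsing_inv _ hS, one_mulVec]
  exact congrFun h ⟨p, hp⟩

theorem noiselessCondVar_eq_sub_sum_inv_mulVec_mul [DecidableEq ι] {k : Matrix ι ι ℝ}
    (hk : k.IsSymm) (S : Finset ι) (x : ι) :
    noiselessCondVar k S x =
      k x x - ∑ i : S, ((kerMatOn k S)⁻¹ *ᵥ fun a : S => k a x) i * k i x := by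
  simp only [noiselessCondVar, Matrix.mulVec, dotProduct, Finset.sum_mul]
  simp only [hk.apply x, mul_comm, mul_left_comm]

theorem postVar_eq_noiselessCondVar_add_quadForm_general [Fintype ι] [DecidableEq ι]
    (k : Matrix ι ι ℝ) (ρ2 : ι → ℝ)
    (hk : k.PosSemidef)
    (S : Finset ι) (hS : IsUnit (kerMatOn k S).det)
    (B : List ι) (hB : ∀ z ∈ B, z ∈ S) (x : ι) :
    postVar k ρ2 B x =
      noiselessCondVar k S x +
        ∑ i : S, ∑ j : S,
          (∑ a : S, (kerMatOn k S)⁻¹ i a * k a.1 x) *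
            postCov k ρ2 B i.1 j.1 *
            (∑ a : S, (kerMatOn k S)⁻¹ j a * k a.1 x) := by
  have hsymm : k.IsSymm := isHermitian_iff_isSymm.mp hk.isHermitian
  set z := (kerMatOn k S)⁻¹ *ᵥ fun a : S => k a x
  have hz : ∀ p ∈ S, ∑ j : S, k p j * z j = k p x := fun p hp =>
    sum_kerMatOn_mul_inv_mulVec hS x hp
  have hz' : ∀ p ∈ S, ∑ i : S, z i * k i p = k x p := fun p hp => by
    rw [hsymm.apply p x, ← hz p hp]
    exact Finset.sum_congr rfl fun i _ => by rw [mul_comm, hsymm.apply]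
  have hquad : ∑ i : S, ∑ j : S, z i * postCov k ρ2 B i j * z j =
      postVar k ρ2 B x - k x x + ∑ i : S, z i * k i x := by
    calc ∑ i : S, ∑ j : S, z i * postCov k ρ2 B i j * z j
        = ∑ i : S, z i * ∑ j : S, postCov k ρ2 B i j * z j := by
          simp only [Finset.mul_sum, mul_assoc]
      _ = ∑ i : S, z i * postCov k ρ2 B i x := by
          simp only [sum_postCov_mul_eq k ρ2 B (fun p hp => hz p (hB p hp)), hz _ (Subtype.prop _),
            sub_add_cancel]
      _ = _ := sum_mul_postCov_eq k ρ2 B (fun p hp => hz' p (hB p hp)) x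
  change _ = _ + ∑ i : S, ∑ j : S, z i * postCov k ρ2 B i j * z j
  rw [hquad, noiselessCondVar_eq_sub_sum_inv_mulVec_mul hsymm]
  ring

/-- law of total variance for Gaussian conditioning: if `K_SS` is
invertible, then for every `x ∈ 𝒳` and every multiset `B ⊆ S`,
`Var(f_x ∣ y_B) = Var(f_x ∣ f_S) + zᵀ Var(f_S ∣ y_B) z` with `z = K_SS⁻¹ K_{Sx}`. -/
theorem postVar_eq_noiselessCondVar_add_quadForm [Fintype ι] [DecidableEq ι]
    (k : Matrix ι ι ℝ) (ρ2 : ι → ℝ)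
    (hk : k.PosSemidef) (hρ : ∀ x, 0 < ρ2 x)
    (S : Finset ι) (hS : IsUnit (kerMatOn k S).det)
    (B : List ι) (hB : ∀ z ∈ B, z ∈ S) (x : ι) :
    postVar k ρ2 B x =
      noiselessCondVar k S x +
        ∑ i : S, ∑ j : S,
          (∑ a : S, (kerMatOn k S)⁻¹ i a * k a.1 x) *
            postCov k ρ2 B i.1 j.1 *
            (∑ a : S, (kerMatOn k S)⁻¹ j a * k a.1 x) :=
  postVar_eq_noiselessCondVar_add_quadForm_general k ρ2 hk S hS B hB x

end TransductiveAL
end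

section
/- Submodularity of the batch-selection objective when S ⊆ A: in the Gaussian kernel setting with finite target space A and sample space S ⊆ A, the set function F(B) = I(f_A; y_B | D) on multisets B ⊆ S is submodular: for all B' ⊆ B ⊆ S and every x ∈ S, F(B ∪ {x}) − F(B) ≤ F(B' ∪ {x}) − F(B'). Consequently, the submodularity ratio of F up to any cardinality k is at least 1, and the greedy batch is a (1 − 1/e)-approximation of the optimal batch of the same size. -/
open Matrix Real

/-!
Since every observed point lies in `A`, the Woodbury identity turns the posterior covariance of
`f_A` into the inverse of the posterior precision `K_AA⁻¹ + Σ_{x ∈ D ++ B} ρ²(x)⁻¹ eₓ eₓᵀ`, so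
`F(B)` is half the log-determinant of this precision, up to a constant. Observing `x` once more
adds `ρ²(x)⁻¹ eₓ eₓᵀ` and raises the log-determinant by `log (1 + ρ²(x)⁻¹ (P⁻¹)ₓₓ)`; since
`P ↦ P⁻¹` is antitone in the Loewner order, this gain shrinks as observations accumulate. From
these diminishing returns the submodularity ratio is at least `1`, and with monotonicity the
Nemhauser–Wolsey–Fisher argument gives the `1 − 1/e` guarantee of the greedy batch.
-/

namespace Matrix

variable {n : Type*} [Fintype n] [DecidableEq n]

theorem det_add_single_self {α : Type*} [CommRing α] {P : Matrix n n α} (hP : IsUnit P.det)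
    (i : n) (t : α) : (P + single i i t).det = P.det * (1 + t * P⁻¹ i i) := by
  have hsingle : single i i t =
      replicateCol Unit (Pi.single i t) * replicateRow Unit (Pi.single i (1 : α)) := by
    ext a b
    simp only [mul_apply, replicateCol_apply, replicateRow_apply, single_apply, Pi.single_apply,
      Finset.univ_unique, Finset.sum_singleton]
    split_ifs <;> simp_all
  rw [hsingle, det_add_replicateCol_mul_replicateRow hP, det_unique (1 + _)]
  simp [mul_apply, Pi.single_apply, mul_comm]

theorem PosDef.dotProduct_inv_mulVec_le {P Q : Matrix n n ℝ} (hP : P.PosDef)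
    (hPQ : (Q - P).PosSemidef) (u : n → ℝ) : u ⬝ᵥ Q⁻¹ *ᵥ u ≤ u ⬝ᵥ P⁻¹ *ᵥ u := by
  have hQ : Q.PosDef := by simpa using hP.add_posSemidef hPQ
  set v := Q⁻¹ *ᵥ u
  set w := P⁻¹ *ᵥ u
  have hQv : Q *ᵥ v = u := by simp [v, mulVec_mulVec, mul_nonsing_inv _ hQ.det_pos.ne'.isUnit]
  have hPw : P *ᵥ w = u := by simp [w, mulVec_mulVec, mul_nonsing_inv _ hP.det_pos.ne'.isUnit]
  have hPsymm : w ⬝ᵥ P *ᵥ v = v ⬝ᵥ u := by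
    rw [dotProduct_mulVec, ← mulVec_transpose, ← conjTranspose_eq_transpose_of_trivial,
      hP.isHermitian, hPw, dotProduct_comm]
  -- `0 ≤ (v - w)ᵀ P (v - w)` and `0 ≤ vᵀ (Q - P) v` add up to `vᵀ u ≤ wᵀ u`.
  have h1 := hP.posSemidef.dotProduct_mulVec_nonneg (v - w)
  have h2 := hPQ.dotProduct_mulVec_nonneg v
  simp only [star_trivial, mulVec_sub, sub_mulVec, dotProduct_sub, sub_dotProduct, hQv, hPw,
    hPsymm] at h1 h2
  rw [dotProduct_comm u v, dotProduct_comm u w]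
  linarith

theorem PosDef.inv_apply_self_antitone {P Q : Matrix n n ℝ} (hP : P.PosDef)
    (hPQ : (Q - P).PosSemidef) (i : n) : Q⁻¹ i i ≤ P⁻¹ i i := by
  simpa using hP.dotProduct_inv_mulVec_le hPQ (Pi.single i 1)

theorem PosDef.log_det_add_single_self {P : Matrix n n ℝ} (hP : P.PosDef) (i : n) {t : ℝ}
    (ht : 0 ≤ t) : log (P + single i i t).det = log P.det + log (1 + t * P⁻¹ i i) := by
  have : 0 < 1 + t * P⁻¹ i i := by nlinarith [hP.inv.diag_pos (i := i)]
  rw [det_add_single_self hP.det_pos.ne'.isUnit, log_mul hP.det_pos.ne' this.ne']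

theorem PosDef.log_det_le_log_det_add_single_self {P : Matrix n n ℝ} (hP : P.PosDef) (i : n)
    {t : ℝ} (ht : 0 ≤ t) : log P.det ≤ log (P + single i i t).det := by
  rw [hP.log_det_add_single_self i ht, le_add_iff_nonneg_right]
  exact log_nonneg (le_add_of_nonneg_right (mul_nonneg ht (hP.inv.diag_pos (i := i)).le))

theorem PosDef.log_det_add_single_self_sub_antitone {P Q : Matrix n n ℝ} (hP : P.PosDef)
    (hPQ : (Q - P).PosSemidef) (i : n) {t : ℝ} (ht : 0 ≤ t) :
    log (Q + single i i t).det - log Q.det ≤ log (P + single i i t).det - log P.det := by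
  have hQ : Q.PosDef := by simpa using hP.add_posSemidef hPQ
  rw [hP.log_det_add_single_self i ht, hQ.log_det_add_single_self i ht, add_sub_cancel_left,
    add_sub_cancel_left]
  have hQii : 0 < Q⁻¹ i i := hQ.inv.diag_pos
  gcongr
  exact hP.inv_apply_self_antitone hPQ i

end Matrix

theorem le_one_sub_inv_pow_mul_of_le_mul_sub {g : ℕ → ℝ} {b : ℝ} (hb : 1 ≤ b)
    (hg : ∀ i, g i ≤ b * (g i - g (i + 1))) (n : ℕ) : g n ≤ (1 - 1 / b) ^ n * g 0 := by
  induction n with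
  | zero => simp
  | succ n ih =>
    have hb0 : 0 < b := by linarith
    have hdiv : g n / b ≤ g n - g (n + 1) := by
      rw [div_le_iff₀' hb0]
      exact hg n
    calc g (n + 1) ≤ (1 - 1 / b) * g n := by rw [sub_mul, one_mul, one_div_mul_eq_div]; linarith
      _ ≤ (1 - 1 / b) * ((1 - 1 / b) ^ n * g 0) := by
        gcongr
        exact sub_nonneg.mpr ((div_le_one hb0).mpr hb)
      _ = (1 - 1 / b) ^ (n + 1) * g 0 := by ring

namespace TransductiveAL

variable {ι : Type*}

section SetFunction

def DiminishingReturnsOn (F : List ι → ℝ) (s : Set ι) : Prop :=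
  ∀ B' B : List ι, (∀ z ∈ B, z ∈ s) → B'.Subperm B → ∀ x ∈ s,
    F (B ++ [x]) - F B ≤ F (B' ++ [x]) - F B'

def IsGreedySeq (F : List ι → ℝ) (s : Set ι) (xs : ℕ → ι) : Prop :=
  ∀ i, xs i ∈ s ∧ ∀ x ∈ s, F (obsList xs i ++ [x]) ≤ F (obsList xs i ++ [xs i])

namespace DiminishingReturnsOn

variable {F : List ι → ℝ} {s t : Set ι}

theorem mono (hF : DiminishingReturnsOn F s) (hts : t ⊆ s) : DiminishingReturnsOn F t :=
  fun B' B hB hB' x hx => hF B' B (fun z hz => hts (hB z hz)) hB' x (hts hx)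

theorem sub_le_sum (hF : DiminishingReturnsOn F s) {B X : List ι} (hB : ∀ z ∈ B, z ∈ s)
    (hX : ∀ z ∈ X, z ∈ s) :
    F (B ++ X) - F B ≤ ∑ i : Fin X.length, (F (B ++ [X.get i]) - F B) := by
  simp only [List.get_eq_getElem, Fin.sum_univ_fun_getElem (f := fun x => F (B ++ [x]) - F B)]
  induction X generalizing B with
  | nil => simp
  | cons x X ih =>
    have hx : x ∈ s := hX x List.mem_cons_self
    have hXs : ∀ z ∈ X, z ∈ s := fun z hz => hX z (List.mem_cons_of_mem x hz)
    have hBx : ∀ z ∈ B ++ [x], z ∈ s := List.forall_mem_append.mpr ⟨hB, by simpa using hx⟩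
    have hshrink : ∀ y ∈ X, F (B ++ [x] ++ [y]) - F (B ++ [x]) ≤ F (B ++ [y]) - F B :=
      fun y hy => hF B (B ++ [x]) hBx (List.sublist_append_left B [x]).subperm y (hXs y hy)
    have := ih hBx hXs
    rw [List.map_cons, List.sum_cons, ← List.singleton_append, ← List.append_assoc]
    linarith [List.sum_le_sum hshrink]

end DiminishingReturnsOn

theorem obsList_zero (xs : ℕ → ι) : obsList xs 0 = [] := rfl

theorem obsList_succ (xs : ℕ → ι) (n : ℕ) : obsList xs (n + 1) = obsList xs n ++ [xs n] := by
  simp [obsList, List.range_succ]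

namespace IsGreedySeq

variable {F : List ι → ℝ} {s : Set ι} {xs : ℕ → ι}

theorem obsList_mem (hxs : IsGreedySeq F s xs) (n : ℕ) : ∀ z ∈ obsList xs n, z ∈ s := by
  simp only [obsList, List.mem_map]
  rintro _ ⟨i, -, rfl⟩
  exact (hxs i).1

theorem sub_le_length_mul_gain (hxs : IsGreedySeq F s xs) (hF : DiminishingReturnsOn F s)
    (hmono : ∀ G B : List ι, (∀ z ∈ G, z ∈ s) → (∀ z ∈ B, z ∈ s) → F B ≤ F (G ++ B))
    {B : List ι} (hB : ∀ z ∈ B, z ∈ s) (i : ℕ) :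
    F B - F (obsList xs i) ≤ B.length * (F (obsList xs (i + 1)) - F (obsList xs i)) := by
  have hgain : ∀ j : Fin B.length, F (obsList xs i ++ [B.get j]) - F (obsList xs i) ≤
      F (obsList xs (i + 1)) - F (obsList xs i) := by
    intro j
    rw [obsList_succ]
    linarith [(hxs i).2 _ (hB _ (B.get_mem j))]
  calc F B - F (obsList xs i)
      ≤ F (obsList xs i ++ B) - F (obsList xs i) := by linarith [hmono _ B (hxs.obsList_mem i) hB]
    _ ≤ ∑ j : Fin B.length, (F (obsList xs i ++ [B.get j]) - F (obsList xs i)) :=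
      hF.sub_le_sum (hxs.obsList_mem i) hB
    _ ≤ ∑ _j : Fin B.length, (F (obsList xs (i + 1)) - F (obsList xs i)) :=
      Finset.sum_le_sum fun j _ => hgain j
    _ = B.length * (F (obsList xs (i + 1)) - F (obsList xs i)) := by simp [mul_sub]

theorem one_sub_exp_mul_le (hxs : IsGreedySeq F s xs) (hF : DiminishingReturnsOn F s)
    (hmono : ∀ G B : List ι, (∀ z ∈ G, z ∈ s) → (∀ z ∈ B, z ∈ s) → F B ≤ F (G ++ B))
    (h0 : F [] = 0) {B : List ι} (hB : ∀ z ∈ B, z ∈ s) :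
    (1 - exp (-1)) * F B ≤ F (obsList xs B.length) := by
  rcases eq_or_ne B [] with rfl | hBne
  · simp [h0, obsList_zero]
  have hlen : (1 : ℝ) ≤ B.length := by exact_mod_cast List.length_pos_iff.mpr hBne
  have hFB : 0 ≤ F B := by simpa [h0] using hmono B [] hB (by simp)
  have hgap := le_one_sub_inv_pow_mul_of_le_mul_sub (g := fun i => F B - F (obsList xs i)) hlen
    (fun i => by linarith [hxs.sub_le_length_mul_gain hF hmono hB i]) B.length
  have hexp : (1 - 1 / (B.length : ℝ)) ^ B.length ≤ exp (-1) :=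
    Real.one_sub_div_pow_le_exp_neg hlen
  simp only [obsList_zero, h0, sub_zero] at hgap
  nlinarith

theorem one_sub_exp_mul_sSup_le (hxs : IsGreedySeq F s xs) (hF : DiminishingReturnsOn F s)
    (hmono : ∀ G B : List ι, (∀ z ∈ G, z ∈ s) → (∀ z ∈ B, z ∈ s) → F B ≤ F (G ++ B))
    (h0 : F [] = 0) (b : ℕ) :
    (1 - exp (-1)) * sSup {v : ℝ | ∃ B : List ι, B.length = b ∧ (∀ z ∈ B, z ∈ s) ∧ v = F B} ≤
      F (obsList xs b) := by
  have hpos : 0 < 1 - exp (-1) := by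
    linarith [exp_lt_one_iff.mpr (show (-1 : ℝ) < 0 by norm_num)]
  rw [← le_div_iff₀' hpos]
  refine Real.sSup_le ?_ (div_nonneg ?_ hpos.le)
  · rintro _ ⟨B, rfl, hB, rfl⟩
    rw [le_div_iff₀' hpos]
    exact hxs.one_sub_exp_mul_le hF hmono h0 hB
  · simpa [h0] using hmono _ [] (hxs.obsList_mem b) (by simp)

end IsGreedySeq

end SetFunction

section Gaussian

variable {k : Matrix ι ι ℝ} {ρ2 : ι → ℝ} {A : Finset ι} {D E : List ι}

def obsIndex (hE : ∀ z ∈ E, z ∈ A) (i : Fin E.length) : A :=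
  ⟨E.get i, hE _ (E.get_mem i)⟩

theorem noiseMat_inv (hρ : ∀ x, 0 < ρ2 x) (E : List ι) :
    (noiseMat ρ2 E)⁻¹ = diagonal fun i => (ρ2 (E.get i))⁻¹ := by
  refine inv_eq_right_inv ?_
  rw [noiseMat, diagonal_mul_diagonal, ← diagonal_one]
  exact congrArg diagonal (funext fun i => mul_inv_cancel₀ (hρ _).ne')

theorem noiseMat_posDef (hρ : ∀ x, 0 < ρ2 x) (E : List ι) : (noiseMat ρ2 E).PosDef :=
  posDef_diagonal_iff.mpr fun _ => hρ _

variable [DecidableEq ι]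

def selMat (hE : ∀ z ∈ E, z ∈ A) : Matrix (Fin E.length) A ℝ :=
  (1 : Matrix A A ℝ).submatrix (obsIndex hE) id

theorem selMat_mul {n : Type*} (hE : ∀ z ∈ E, z ∈ A) (M : Matrix A n ℝ) :
    selMat hE * M = M.submatrix (obsIndex hE) id := by
  simpa [selMat] using one_submatrix_mul (obsIndex hE) (Equiv.refl _) M

theorem mul_selMat_transpose {m : Type*} (hE : ∀ z ∈ E, z ∈ A) (M : Matrix m A ℝ) :
    M * (selMat hE)ᵀ = M.submatrix id (obsIndex hE) := by
  simpa [selMat] using mul_submatrix_one (Equiv.refl _) (obsIndex hE) M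

theorem kerMat_eq_selMat (hE : ∀ z ∈ E, z ∈ A) :
    kerMat k E = selMat hE * kerMatOn k A * (selMat hE)ᵀ := by
  rw [selMat_mul, mul_selMat_transpose]
  rfl

theorem targetCov_eq_sub (hE : ∀ z ∈ E, z ∈ A) :
    targetCov k ρ2 A E = kerMatOn k A - kerMatOn k A * (selMat hE)ᵀ *
      (kerMat k E + noiseMat ρ2 E)⁻¹ * (selMat hE * kerMatOn k A) := by
  rw [selMat_mul, mul_selMat_transpose]
  ext a b
  simp only [targetCov, postCov, kerMatOn, obsIndex, of_apply, Matrix.sub_apply, mul_apply,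
    submatrix_apply, id, Finset.sum_mul]
  rw [Finset.sum_comm]

noncomputable def obsPrecision (ρ2 : ι → ℝ) (A : Finset ι) (E : List ι) : Matrix A A ℝ :=
  diagonal fun a => (E.count a.1 : ℝ) / ρ2 a.1

theorem obsPrecision_sub_posSemidef (hρ : ∀ x, 0 < ρ2 x) {E E' : List ι} (h : E.Subperm E') :
    (obsPrecision ρ2 A E' - obsPrecision ρ2 A E).PosSemidef := by
  rw [obsPrecision, obsPrecision, diagonal_sub]
  refine PosSemidef.diagonal fun a => sub_nonneg.mpr ?_
  gcongr
  · exact (hρ a).le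
  · exact h.count_le a

theorem obsPrecision_posSemidef (hρ : ∀ x, 0 < ρ2 x) (E : List ι) :
    (obsPrecision ρ2 A E).PosSemidef := by
  simpa [obsPrecision] using obsPrecision_sub_posSemidef (A := A) hρ (List.nil_subperm (l := E))

theorem obsPrecision_append_singleton (E : List ι) {x : ι} (hx : x ∈ A) :
    obsPrecision ρ2 A (E ++ [x]) = obsPrecision ρ2 A E + single ⟨x, hx⟩ ⟨x, hx⟩ (ρ2 x)⁻¹ := by
  rw [obsPrecision, obsPrecision, ← diagonal_single, diagonal_add]
  congr 1
  ext a
  rcases eq_or_ne a ⟨x, hx⟩ with rfl | hax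
  · simp [add_div]
  · have : x ≠ a.1 := fun h => hax (Subtype.ext h.symm)
    simp [hax, this]

theorem obsPrecision_congr_perm {E E' : List ι} (h : E.Perm E') :
    obsPrecision ρ2 A E = obsPrecision ρ2 A E' := by
  simp only [obsPrecision, h.count_eq]

theorem sum_get_eq_count (E : List ι) (a : ι) :
    ∑ i : Fin E.length, (if E.get i = a then (1 : ℝ) else 0) = E.count a := by
  simp only [List.get_eq_getElem]
  rw [Fin.sum_univ_fun_getElem E (fun y => if y = a then (1 : ℝ) else 0), List.sum_map_ite_eq]
  simp

theorem selMat_transpose_mul_noiseMat_inv_mul (hρ : ∀ x, 0 < ρ2 x) (hE : ∀ z ∈ E, z ∈ A) :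
    (selMat hE)ᵀ * (noiseMat ρ2 E)⁻¹ * selMat hE = obsPrecision ρ2 A E := by
  have hterm : ∀ a b i, (1 : Matrix A A ℝ) (obsIndex hE i) a * (ρ2 (E.get i))⁻¹ *
      (1 : Matrix A A ℝ) (obsIndex hE i) b =
        if a = b then (if E.get i = a then 1 else 0) * (ρ2 a)⁻¹ else 0 := by
    intro a b i
    by_cases h : obsIndex hE i = a
    · subst h
      by_cases hb : obsIndex hE i = b
      · subst hb; simp [obsIndex]
      · simp [hb]
    · have h' : E.get i ≠ a := fun h' => h (Subtype.ext h')
      simp only [one_apply_ne h, if_neg h', zero_mul, ite_self]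
  ext a b
  rw [noiseMat_inv hρ, mul_apply]
  simp only [selMat, mul_diagonal, transpose_apply, submatrix_apply, id, hterm, obsPrecision,
    diagonal_apply]
  split_ifs
  · rw [← Finset.sum_mul, sum_get_eq_count, div_eq_mul_inv]
  · simp

noncomputable def postPrecision (k : Matrix ι ι ℝ) (ρ2 : ι → ℝ) (A : Finset ι) (E : List ι) :
    Matrix A A ℝ :=
  (kerMatOn k A)⁻¹ + obsPrecision ρ2 A E

theorem targetCov_eq_postPrecision_inv (hρ : ∀ x, 0 < ρ2 x) (hK : (kerMatOn k A).PosDef)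
    (hE : ∀ z ∈ E, z ∈ A) : targetCov k ρ2 A E = (postPrecision k ρ2 A E)⁻¹ := by
  set K := kerMatOn k A
  set Φ := selMat hE
  have hN := noiseMat_posDef hρ E
  have hKK : K⁻¹⁻¹ = K := nonsing_inv_nonsing_inv _ hK.det_pos.ne'.isUnit
  have hNN : (noiseMat ρ2 E)⁻¹⁻¹ = noiseMat ρ2 E :=
    nonsing_inv_nonsing_inv _ hN.det_pos.ne'.isUnit
  have hinner : (noiseMat ρ2 E + Φ * K * Φᵀ).PosDef := by
    simpa using hN.add_posSemidef (hK.posSemidef.mul_mul_conjTranspose_same Φ)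
  have woodbury := add_mul_mul_inv_eq_sub K⁻¹ Φᵀ (noiseMat ρ2 E)⁻¹ Φ hK.inv.isUnit
    hN.inv.isUnit (by rw [hKK, hNN]; exact hinner.isUnit)
  rw [hKK, hNN, selMat_transpose_mul_noiseMat_inv_mul hρ hE] at woodbury
  rw [postPrecision, woodbury, targetCov_eq_sub hE, kerMat_eq_selMat hE, add_comm,
    Matrix.mul_assoc _ Φ K]

theorem targetCov_det_eq_zero (hdet : (kerMatOn k A).det = 0) (hE : ∀ z ∈ E, z ∈ A) :
    (targetCov k ρ2 A E).det = 0 := by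
  obtain ⟨v, hv, hKv⟩ := exists_mulVec_eq_zero_iff.mpr hdet
  refine exists_mulVec_eq_zero_iff.mp ⟨v, hv, ?_⟩
  rw [targetCov_eq_sub hE, sub_mulVec, hKv, ← mulVec_mulVec, ← mulVec_mulVec (M := selMat hE),
    hKv, mulVec_zero, mulVec_zero, sub_zero]

theorem postPrecision_posDef (hρ : ∀ x, 0 < ρ2 x) (hK : (kerMatOn k A).PosDef) (E : List ι) :
    (postPrecision k ρ2 A E).PosDef :=
  hK.inv.add_posSemidef (obsPrecision_posSemidef hρ E)

theorem postPrecision_sub_posSemidef (hρ : ∀ x, 0 < ρ2 x) {E E' : List ι} (h : E.Subperm E') :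
    (postPrecision k ρ2 A E' - postPrecision k ρ2 A E).PosSemidef := by
  rw [postPrecision, postPrecision, add_sub_add_left_eq_sub]
  exact obsPrecision_sub_posSemidef hρ h

theorem postPrecision_append_singleton (E : List ι) {x : ι} (hx : x ∈ A) :
    postPrecision k ρ2 A (E ++ [x]) =
      postPrecision k ρ2 A E + single ⟨x, hx⟩ ⟨x, hx⟩ (ρ2 x)⁻¹ := by
  rw [postPrecision, postPrecision, obsPrecision_append_singleton E hx, add_assoc]

theorem postPrecision_congr_perm {E E' : List ι} (h : E.Perm E') :
    postPrecision k ρ2 A E = postPrecision k ρ2 A E' := by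
  rw [postPrecision, postPrecision, obsPrecision_congr_perm h]

theorem log_det_postPrecision_le_append (hρ : ∀ x, 0 < ρ2 x) (hK : (kerMatOn k A).PosDef)
    (E : List ι) {G : List ι} (hG : ∀ z ∈ G, z ∈ A) :
    log (postPrecision k ρ2 A E).det ≤ log (postPrecision k ρ2 A (E ++ G)).det := by
  induction G generalizing E with
  | nil => simp
  | cons g G ih =>
    have hg : g ∈ A := hG g List.mem_cons_self
    calc log (postPrecision k ρ2 A E).det
        ≤ log (postPrecision k ρ2 A (E ++ [g])).det := by
          rw [postPrecision_append_singleton E hg]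
          exact (postPrecision_posDef hρ hK E).log_det_le_log_det_add_single_self _
            (inv_nonneg.mpr (hρ g).le)
      _ ≤ log (postPrecision k ρ2 A (E ++ g :: G)).det := by
          simpa using ih (E ++ [g]) fun z hz => hG z (List.mem_cons_of_mem g hz)

theorem iGain_eq_log_det_postPrecision (hρ : ∀ x, 0 < ρ2 x) (hK : (kerMatOn k A).PosDef)
    {B : List ι} (hD : ∀ z ∈ D, z ∈ A) (hB : ∀ z ∈ B, z ∈ A) :
    iGain k ρ2 A D B =
      (1 / 2) * (log (postPrecision k ρ2 A (D ++ B)).det - log (postPrecision k ρ2 A D).det) := by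
  have hDB : ∀ z ∈ D ++ B, z ∈ A := List.forall_mem_append.mpr ⟨hD, hB⟩
  rw [iGain, targetCov_eq_postPrecision_inv hρ hK hD, targetCov_eq_postPrecision_inv hρ hK hDB,
    det_nonsing_inv, det_nonsing_inv, Ring.inverse_eq_inv', log_inv, log_inv]
  ring

theorem iGain_nil : iGain k ρ2 A D [] = 0 := by
  simp [iGain]

theorem iGain_eq_zero_of_det_eq_zero (hdet : (kerMatOn k A).det = 0) (hD : ∀ z ∈ D, z ∈ A)
    {B : List ι} (hB : ∀ z ∈ B, z ∈ A) : iGain k ρ2 A D B = 0 := by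
  have hDB : ∀ z ∈ D ++ B, z ∈ A := List.forall_mem_append.mpr ⟨hD, hB⟩
  simp [iGain, targetCov_det_eq_zero hdet hD, targetCov_det_eq_zero hdet hDB]

theorem iGain_diminishingReturnsOn_of_posDef (hρ : ∀ x, 0 < ρ2 x) (hK : (kerMatOn k A).PosDef)
    (hD : ∀ z ∈ D, z ∈ A) : DiminishingReturnsOn (iGain k ρ2 A D) A := by
  intro B' B hB hB'B x hx
  have hB' : ∀ z ∈ B', z ∈ A := fun z hz => hB z (hB'B.subset hz)
  have hBx : ∀ z ∈ B ++ [x], z ∈ A := List.forall_mem_append.mpr ⟨hB, by simpa using hx⟩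
  have hB'x : ∀ z ∈ B' ++ [x], z ∈ A := List.forall_mem_append.mpr ⟨hB', by simpa using hx⟩
  rw [iGain_eq_log_det_postPrecision hρ hK hD hBx, iGain_eq_log_det_postPrecision hρ hK hD hB,
    iGain_eq_log_det_postPrecision hρ hK hD hB'x, iGain_eq_log_det_postPrecision hρ hK hD hB',
    ← List.append_assoc, ← List.append_assoc, postPrecision_append_singleton _ hx,
    postPrecision_append_singleton _ hx]
  have := (postPrecision_posDef hρ hK (D ++ B')).log_det_add_single_self_sub_antitone
    (postPrecision_sub_posSemidef hρ ((List.subperm_append_left D).mpr hB'B)) ⟨x, hx⟩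
    (inv_nonneg.mpr (hρ x).le)
  linarith

theorem iGain_le_iGain_append_of_posDef (hρ : ∀ x, 0 < ρ2 x) (hK : (kerMatOn k A).PosDef)
    (hD : ∀ z ∈ D, z ∈ A) {G B : List ι} (hG : ∀ z ∈ G, z ∈ A) (hB : ∀ z ∈ B, z ∈ A) :
    iGain k ρ2 A D B ≤ iGain k ρ2 A D (G ++ B) := by
  have hGB : ∀ z ∈ G ++ B, z ∈ A := List.forall_mem_append.mpr ⟨hG, hB⟩
  rw [iGain_eq_log_det_postPrecision hρ hK hD hB, iGain_eq_log_det_postPrecision hρ hK hD hGB,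
    postPrecision_congr_perm (List.perm_append_comm.append_left D), ← List.append_assoc]
  linarith [log_det_postPrecision_le_append hρ hK (D ++ B) hG]

-- With `log 0 = 0` as junk value, a singular `K_AA` makes every gain vanish.
theorem posDef_or_iGain_eq_zero (hk : k.PosSemidef) (hD : ∀ z ∈ D, z ∈ A) :
    (kerMatOn k A).PosDef ∨ ∀ B : List ι, (∀ z ∈ B, z ∈ A) → iGain k ρ2 A D B = 0 := by
  have hKA : (kerMatOn k A).PosSemidef := hk.submatrix Subtype.val
  by_cases hdet : (kerMatOn k A).det = 0
  · exact .inr fun B hB => iGain_eq_zero_of_det_eq_zero hdet hD hB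
  · exact .inl (hKA.posDef_iff_det_ne_zero.mpr hdet)

theorem iGain_diminishingReturnsOn (hk : k.PosSemidef) (hρ : ∀ x, 0 < ρ2 x)
    (hD : ∀ z ∈ D, z ∈ A) : DiminishingReturnsOn (iGain k ρ2 A D) A := by
  rcases posDef_or_iGain_eq_zero (ρ2 := ρ2) hk hD with hK | hzero
  · exact iGain_diminishingReturnsOn_of_posDef hρ hK hD
  · intro B' B hB hB'B x hx
    have hB' : ∀ z ∈ B', z ∈ A := fun z hz => hB z (hB'B.subset hz)
    rw [hzero B hB, hzero B' hB', hzero _ (List.forall_mem_append.mpr ⟨hB, by simpa using hx⟩),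
      hzero _ (List.forall_mem_append.mpr ⟨hB', by simpa using hx⟩)]

theorem iGain_le_iGain_append (hk : k.PosSemidef) (hρ : ∀ x, 0 < ρ2 x) (hD : ∀ z ∈ D, z ∈ A)
    {G B : List ι} (hG : ∀ z ∈ G, z ∈ A) (hB : ∀ z ∈ B, z ∈ A) :
    iGain k ρ2 A D B ≤ iGain k ρ2 A D (G ++ B) := by
  rcases posDef_or_iGain_eq_zero (ρ2 := ρ2) hk hD with hK | hzero
  · exact iGain_le_iGain_append_of_posDef hρ hK hD hG hB
  · rw [hzero B hB, hzero _ (List.forall_mem_append.mpr ⟨hG, hB⟩)]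

end Gaussian

theorem batch_objective_submodular_general [DecidableEq ι]
    (k : Matrix ι ι ℝ) (ρ2 : ι → ℝ)
    (hk : k.PosSemidef) (hρ : ∀ x, 0 < ρ2 x)
    (A S : Finset ι) (hSA : S ⊆ A)
    (D : List ι) (hD : ∀ z ∈ D, z ∈ S) :
    -- submodularity: diminishing marginal gains
    (∀ B' B : List ι, (∀ z ∈ B, z ∈ S) → B'.Subperm B → ∀ x ∈ S,
      iGain k ρ2 A D (B ++ [x]) - iGain k ρ2 A D B ≤
        iGain k ρ2 A D (B' ++ [x]) - iGain k ρ2 A D B') ∧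
    -- the submodularity ratio is at least 1
    (∀ B X : List ι, (∀ z ∈ B, z ∈ S) → (∀ z ∈ X, z ∈ S) →
      iGain k ρ2 A D (B ++ X) - iGain k ρ2 A D B ≤
        ∑ i : Fin X.length, (iGain k ρ2 A D (B ++ [X.get i]) - iGain k ρ2 A D B)) ∧
    -- greedy batches are (1 - 1/e)-approximations of optimal batches
    (∀ xs : ℕ → ι,
      (∀ i : ℕ, xs i ∈ S ∧ ∀ x ∈ S,
        iGain k ρ2 A D (obsList xs i ++ [x]) ≤
          iGain k ρ2 A D (obsList xs i ++ [xs i])) →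
      ∀ b : ℕ,
        (1 - Real.exp (-1)) *
            sSup { v : ℝ | ∃ B : List ι, B.length = b ∧ (∀ z ∈ B, z ∈ S) ∧
              v = iGain k ρ2 A D B } ≤
          iGain k ρ2 A D (obsList xs b)) := by
  have hDA : ∀ z ∈ D, z ∈ A := fun z hz => hSA (hD z hz)
  have hF : DiminishingReturnsOn (iGain k ρ2 A D) S :=
    (iGain_diminishingReturnsOn hk hρ hDA).mono (Finset.coe_subset.mpr hSA)
  have hmono : ∀ G B : List ι, (∀ z ∈ G, z ∈ S) → (∀ z ∈ B, z ∈ S) →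
      iGain k ρ2 A D B ≤ iGain k ρ2 A D (G ++ B) := fun G B hG hB =>
    iGain_le_iGain_append hk hρ hDA (fun z hz => hSA (hG z hz)) (fun z hz => hSA (hB z hz))
  exact ⟨hF, fun B X hB hX => hF.sub_le_sum hB hX,
    fun xs hxs b => IsGreedySeq.one_sub_exp_mul_sSup_le hxs hF hmono iGain_nil b⟩

/-- submodularity of the batch-selection objective when `S ⊆ A`: the set
function `F(B) = I(f_A; y_B ∣ D)` on multisets `B ⊆ S` is submodular; consequently its
submodularity ratio is at least `1` (i.e. `Δ(X ∣ B) ≤ Σ_{x ∈ X} Δ(x ∣ B)`), and any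
greedy batch is a `(1 − 1/e)`-approximation of the optimal batch of the same size. -/
theorem batch_objective_submodular [Fintype ι] [DecidableEq ι]
    (k : Matrix ι ι ℝ) (ρ2 : ι → ℝ)
    (hk : k.PosSemidef) (hρ : ∀ x, 0 < ρ2 x)
    (A S : Finset ι) (hSA : S ⊆ A)
    (D : List ι) (hD : ∀ z ∈ D, z ∈ S) :
    -- submodularity: diminishing marginal gains
    (∀ B' B : List ι, (∀ z ∈ B, z ∈ S) → B'.Subperm B → ∀ x ∈ S,
      iGain k ρ2 A D (B ++ [x]) - iGain k ρ2 A D B ≤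
        iGain k ρ2 A D (B' ++ [x]) - iGain k ρ2 A D B') ∧
    -- the submodularity ratio is at least 1
    (∀ B X : List ι, (∀ z ∈ B, z ∈ S) → (∀ z ∈ X, z ∈ S) →
      iGain k ρ2 A D (B ++ X) - iGain k ρ2 A D B ≤
        ∑ i : Fin X.length, (iGain k ρ2 A D (B ++ [X.get i]) - iGain k ρ2 A D B)) ∧
    -- greedy batches are (1 - 1/e)-approximations of optimal batches
    (∀ xs : ℕ → ι,
      (∀ i : ℕ, xs i ∈ S ∧ ∀ x ∈ S,
        iGain k ρ2 A D (obsList xs i ++ [x]) ≤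
          iGain k ρ2 A D (obsList xs i ++ [xs i])) →
      ∀ b : ℕ,
        (1 - Real.exp (-1)) *
            sSup { v : ℝ | ∃ B : List ι, B.length = b ∧ (∀ z ∈ B, z ∈ S) ∧
              v = iGain k ρ2 A D B } ≤
          iGain k ρ2 A D (obsList xs b)) :=
  batch_objective_submodular_general k ρ2 hk hρ A S hSA D hD

end TransductiveAL
end
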